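/- arXiv:2506.23148 — 4 statements merged into one kernel-verified Lean document; each statement's English description precedes it below -/
import Mathlib

section
/- Let S = {(0,0),(0,1),(0,2),(0,3),(2,1),(2,2),(3,1),(3,2)}, q1 = (123, S), q2 = (132, S). Then for every n ≥ 2 and all k, ℓ ≥ 0, the number of π ∈ S_n with occ(q1,π)=k and occ(q2,π)=ℓ equals 2·(n−1)! if k = ℓ = 0, and equals binom(k+ℓ, k) · Σ_{i=2}^{n−1} binom(n−1, i) · (n−1−i)! · c(i−1, k+ℓ) if (k,ℓ) ≠ (0,0), where binom denotes the binomial coefficient and c the unsigned Stirling numbers of the first kind. -/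
open Finset


/-- The boundary-extended sequence of positions of a candidate occurrence:
`posExt i 0 = 0`, `posExt i a = i (a-1) + 1` (1-based position) for `1 ≤ a ≤ m`,
and `posExt i (m+1) = n + 1`. -/
def posExt {m n : ℕ} (i : Fin m → Fin n) : ℕ → ℕ := fun a =>
  if h : 1 ≤ a ∧ a ≤ m then ((i ⟨a - 1, by omega⟩ : Fin n) : ℕ) + 1
  else if a = 0 then 0 else n + 1

/-- The boundary-extended increasing rearrangement of the values of a candidate
occurrence: `valExt τ π i 0 = 0`, `valExt τ π i b = π (i (τ⁻¹ (b-1))) + 1`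
(the `b`-th smallest value, 1-based) for `1 ≤ b ≤ m`, and `valExt τ π i (m+1) = n + 1`. -/
def valExt {m n : ℕ} (τ : Equiv.Perm (Fin m)) (π : Equiv.Perm (Fin n))
    (i : Fin m → Fin n) : ℕ → ℕ := fun b =>
  if h : 1 ≤ b ∧ b ≤ m then ((π (i (τ.symm ⟨b - 1, by omega⟩)) : Fin n) : ℕ) + 1
  else if b = 0 then 0 else n + 1

/-- `i : Fin m → Fin n` is an occurrence of the mesh pattern `(τ, R)` in the
permutation `π` of `{1, …, n}` (positions and values are taken 1-based via `+1`). -/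
def IsMeshOcc {m n : ℕ} (τ : Equiv.Perm (Fin m)) (R : Set (ℕ × ℕ))
    (π : Equiv.Perm (Fin n)) (i : Fin m → Fin n) : Prop :=
  StrictMono i ∧
  (∀ a b : Fin m, π (i a) < π (i b) ↔ τ a < τ b) ∧
  ∀ a b : ℕ, (a, b) ∈ R →
    ¬ ∃ j : Fin n,
        posExt i a < (j : ℕ) + 1 ∧ (j : ℕ) + 1 < posExt i (a + 1) ∧
        valExt τ π i b < ((π j : Fin n) : ℕ) + 1 ∧
        ((π j : Fin n) : ℕ) + 1 < valExt τ π i (b + 1)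

/-- The number of occurrences of the mesh pattern `(τ, R)` in `π`. -/
noncomputable def occ {m n : ℕ} (τ : Equiv.Perm (Fin m)) (R : Set (ℕ × ℕ))
    (π : Equiv.Perm (Fin n)) : ℕ :=
  Nat.card {i : Fin m → Fin n // IsMeshOcc τ R π i}

/-- Mesh patterns `(τ₁, R₁)` and `(τ₂, R₂)` are jointly equidistributed. -/
def JointlyEquidistributed {m₁ m₂ : ℕ} (τ₁ : Equiv.Perm (Fin m₁)) (R₁ : Set (ℕ × ℕ))
    (τ₂ : Equiv.Perm (Fin m₂)) (R₂ : Set (ℕ × ℕ)) : Prop :=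
  ∀ n k ℓ : ℕ,
    Nat.card {π : Equiv.Perm (Fin n) // occ τ₁ R₁ π = k ∧ occ τ₂ R₂ π = ℓ} =
    Nat.card {π : Equiv.Perm (Fin n) // occ τ₁ R₁ π = ℓ ∧ occ τ₂ R₂ π = k}

/-- The pattern 123 (identity on three letters). -/
def perm123 : Equiv.Perm (Fin 3) := 1

/-- The pattern 132 (0-indexed: `0 ↦ 0`, `1 ↦ 2`, `2 ↦ 1`). -/
def perm132 : Equiv.Perm (Fin 3) := Equiv.swap 1 2

/-- The pattern 12 (identity on two letters). -/
def perm12 : Equiv.Perm (Fin 2) := 1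

/-- The pattern 21. -/
def perm21 : Equiv.Perm (Fin 2) := Equiv.swap 0 1

/-- The unsigned Stirling numbers of the first kind. -/
def stirlingFirst : ℕ → ℕ → ℕ
  | 0, 0 => 1
  | 0, _ + 1 => 0
  | _ + 1, 0 => 0
  | n + 1, k + 1 => n * stirlingFirst n (k + 1) + stirlingFirst n k


/-- Insert value `v` at position `p` into the pattern `τ`. -/
noncomputable def insPerm {m : ℕ} (p v : Fin (m+1)) (τ : Equiv.Perm (Fin m)) :
    Equiv.Perm (Fin (m+1)) :=
  Equiv.ofBijective (p.insertNth v (fun i => v.succAbove (τ i)))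
    (Finite.injective_iff_bijective.mp (by
      intro x y hxy
      rcases eq_or_ne x p with rfl | hx
      · rcases eq_or_ne y x with rfl | hy
        · rfl
        · obtain ⟨z, rfl⟩ := Fin.exists_succAbove_eq (show y ≠ x from hy)
          simp only [Fin.insertNth_apply_same, Fin.insertNth_apply_succAbove] at hxy
          exact absurd hxy.symm (Fin.succAbove_ne v (τ z))
      · obtain ⟨z, rfl⟩ := Fin.exists_succAbove_eq hx
        rcases eq_or_ne y p with rfl | hy
        · simp only [Fin.insertNth_apply_same, Fin.insertNth_apply_succAbove] at hxy
          exact absurd hxy (Fin.succAbove_ne v (τ z))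
        · obtain ⟨w, rfl⟩ := Fin.exists_succAbove_eq hy
          simp only [Fin.insertNth_apply_succAbove] at hxy
          have := Fin.succAbove_right_injective (p := v) hxy
          exact congrArg p.succAbove (τ.injective this)))

@[simp] lemma insPerm_apply_same {m : ℕ} (p v : Fin (m+1)) (τ : Equiv.Perm (Fin m)) :
    insPerm p v τ p = v := by
  simp only [insPerm, Equiv.ofBijective_apply, Fin.insertNth_apply_same]

@[simp] lemma insPerm_apply_succAbove {m : ℕ} (p v : Fin (m+1)) (τ : Equiv.Perm (Fin m)) (i : Fin m) :
    insPerm p v τ (p.succAbove i) = v.succAbove (τ i) := by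
  simp only [insPerm, Equiv.ofBijective_apply, Fin.insertNth_apply_succAbove]

@[simp] lemma insPerm_symm_same {m : ℕ} (p v : Fin (m+1)) (τ : Equiv.Perm (Fin m)) :
    (insPerm p v τ).symm v = p := by
  rw [Equiv.symm_apply_eq]; simp

@[simp] lemma insPerm_symm_succAbove {m : ℕ} (p v : Fin (m+1)) (τ : Equiv.Perm (Fin m)) (w : Fin m) :
    (insPerm p v τ).symm (v.succAbove w) = p.succAbove (τ.symm w) := by
  rw [Equiv.symm_apply_eq]; simp

/-- (p, τ) ↦ insPerm p v τ is bijective for fixed v. -/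
lemma insPerm_bij_left {m : ℕ} (v : Fin (m+1)) :
    Function.Bijective (fun x : Fin (m+1) × Equiv.Perm (Fin m) => insPerm x.1 v x.2) := by
  rw [Fintype.bijective_iff_injective_and_card]
  constructor
  · intro ⟨p, τ⟩ ⟨q, ρ⟩ h
    simp only at h
    have hp : p = q := by
      have := congrArg (fun e : Equiv.Perm (Fin (m+1)) => e.symm v) h
      simpa using this
    subst hp
    have hτ : τ = ρ := by
      ext i
      have := congrArg (fun e : Equiv.Perm (Fin (m+1)) => e (p.succAbove i)) h
      simp only [insPerm_apply_succAbove] at this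
      exact congrArg Fin.val (Fin.succAbove_right_injective this)
    rw [hτ]
  · simp [Fintype.card_perm, Nat.factorial_succ, mul_comm]

/-- (v, τ) ↦ insPerm p v τ is bijective for fixed p. -/
lemma insPerm_bij_right {m : ℕ} (p : Fin (m+1)) :
    Function.Bijective (fun x : Fin (m+1) × Equiv.Perm (Fin m) => insPerm p x.1 x.2) := by
  rw [Fintype.bijective_iff_injective_and_card]
  constructor
  · intro ⟨v, τ⟩ ⟨w, ρ⟩ h
    simp only at h
    have hv : v = w := by
      have := congrArg (fun e : Equiv.Perm (Fin (m+1)) => e p) h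
      simpa using this
    subst hv
    have hτ : τ = ρ := by
      ext i
      have := congrArg (fun e : Equiv.Perm (Fin (m+1)) => e (p.succAbove i)) h
      simp only [insPerm_apply_succAbove] at this
      exact congrArg Fin.val (Fin.succAbove_right_injective this)
    rw [hτ]
  · simp [Fintype.card_perm, Nat.factorial_succ, mul_comm]

def Rset : Set (ℕ × ℕ) := {(0, 0), (0, 1), (0, 2), (0, 3), (2, 1), (2, 2), (3, 1), (3, 2)}

section PosVal
variable {n : ℕ} (i : Fin 3 → Fin n)

lemma posExt_0 : posExt i 0 = 0 := by simp [posExt]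
lemma posExt_1 : posExt i 1 = (i 0 : ℕ) + 1 := by
  simp only [posExt]; rw [dif_pos (by omega)]; congr 1
lemma posExt_2 : posExt i 2 = (i 1 : ℕ) + 1 := by
  simp only [posExt]; rw [dif_pos (by omega)]; congr 1
lemma posExt_3 : posExt i 3 = (i 2 : ℕ) + 1 := by
  simp only [posExt]; rw [dif_pos (by omega)]; congr 1
lemma posExt_4 : posExt i 4 = n + 1 := by simp [posExt]

variable (π : Equiv.Perm (Fin n))

lemma valExt123_0 : valExt perm123 π i 0 = 0 := by simp [valExt]
lemma valExt123_1 : valExt perm123 π i 1 = (π (i 0) : ℕ) + 1 := by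
  simp only [valExt]; rw [dif_pos (by omega)]; congr 1
lemma valExt123_2 : valExt perm123 π i 2 = (π (i 1) : ℕ) + 1 := by
  simp only [valExt]; rw [dif_pos (by omega)]; congr 1
lemma valExt123_3 : valExt perm123 π i 3 = (π (i 2) : ℕ) + 1 := by
  simp only [valExt]; rw [dif_pos (by omega)]; congr 1
lemma valExt123_4 : valExt perm123 π i 4 = n + 1 := by simp [valExt]

lemma valExt132_0 : valExt perm132 π i 0 = 0 := by simp [valExt]
lemma valExt132_1 : valExt perm132 π i 1 = (π (i 0) : ℕ) + 1 := by
  simp only [valExt]; rw [dif_pos (by omega)]; congr 1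
lemma valExt132_2 : valExt perm132 π i 2 = (π (i 2) : ℕ) + 1 := by
  simp only [valExt]; rw [dif_pos (by omega)]; congr 1
lemma valExt132_3 : valExt perm132 π i 3 = (π (i 1) : ℕ) + 1 := by
  simp only [valExt]; rw [dif_pos (by omega)]; congr 1
lemma valExt132_4 : valExt perm132 π i 4 = n + 1 := by simp [valExt]

end PosVal

lemma mem_Rset (x : ℕ × ℕ) (h : x = (0,0) ∨ x = (0,1) ∨ x = (0,2) ∨ x = (0,3) ∨
    x = (2,1) ∨ x = (2,2) ∨ x = (3,1) ∨ x = (3,2)) : x ∈ Rset := by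
  simp only [Rset, Set.mem_insert_iff, Set.mem_singleton_iff]
  tauto

lemma strictMono_fin3 {α : Type*} [Preorder α] {f : Fin 3 → α} (h01 : f 0 < f 1)
    (h12 : f 1 < f 2) : StrictMono f := by
  intro a b hab
  fin_cases a <;> fin_cases b <;>
    first
      | exact absurd hab (by decide)
      | exact h01
      | exact h12
      | exact h01.trans h12

lemma mesh123_iff {n : ℕ} (π : Equiv.Perm (Fin n)) (i : Fin 3 → Fin n) :
    IsMeshOcc perm123 Rset π i ↔
      ((i 0 : ℕ) = 0 ∧ i 1 < i 2 ∧ π (i 0) < π (i 1) ∧ π (i 1) < π (i 2) ∧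
        ∀ j : Fin n, i 1 < j → j ≠ i 2 → ¬(π (i 0) < π j ∧ π j < π (i 2))) := by
  have e1 : (0:ℕ) + 1 = 1 := rfl
  have e2 : (1:ℕ) + 1 = 2 := rfl
  have e3 : (2:ℕ) + 1 = 3 := rfl
  have e4 : (3:ℕ) + 1 = 4 := rfl
  constructor
  · rintro ⟨hmono, hpat, hshade⟩
    have h01 : (i 0 : ℕ) < i 1 := hmono (show (0:Fin 3) < 1 by decide)
    have h12 : (i 1 : ℕ) < i 2 := hmono (show (1:Fin 3) < 2 by decide)
    have hv01 : (π (i 0) : ℕ) < π (i 1) := (hpat 0 1).mpr (by decide)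
    have hv12 : (π (i 1) : ℕ) < π (i 2) := (hpat 1 2).mpr (by decide)
    have h00 := hshade 0 0 (mem_Rset _ (by tauto))
    have h01' := hshade 0 1 (mem_Rset _ (by tauto))
    have h02 := hshade 0 2 (mem_Rset _ (by tauto))
    have h03 := hshade 0 3 (mem_Rset _ (by tauto))
    have h21 := hshade 2 1 (mem_Rset _ (by tauto))
    have h22 := hshade 2 2 (mem_Rset _ (by tauto))
    have h31 := hshade 3 1 (mem_Rset _ (by tauto))
    have h32 := hshade 3 2 (mem_Rset _ (by tauto))
    simp only [e1, e2, e3, e4, posExt_0, posExt_1, posExt_2, posExt_3, posExt_4, valExt123_0, valExt123_1, valExt123_2, valExt123_3, valExt123_4] at h00 h01' h02 h03 h21 h22 h31 h32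
    have hi0 : (i 0 : ℕ) = 0 := by
      by_contra h0
      have hn : 0 < n := (i 0).pos
      set j : Fin n := ⟨0, hn⟩ with hjdef
      have hj0 : (j : ℕ) = 0 := rfl
      have d0 : (π j : ℕ) ≠ π (i 0) := by
        intro h
        have : j = i 0 := π.injective (Fin.val_injective h)
        apply h0; rw [← this]
      have d1 : (π j : ℕ) ≠ π (i 1) := by
        intro h
        have : j = i 1 := π.injective (Fin.val_injective h)
        have := congrArg Fin.val this
        omega
      have d2 : (π j : ℕ) ≠ π (i 2) := by
        intro h
        have : j = i 2 := π.injective (Fin.val_injective h)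
        have := congrArg Fin.val this
        omega
      have htri : (π j : ℕ) < π (i 0) ∨ ((π (i 0) : ℕ) < π j ∧ (π j : ℕ) < π (i 1)) ∨
          ((π (i 1) : ℕ) < π j ∧ (π j : ℕ) < π (i 2)) ∨ (π (i 2) : ℕ) < π j := by omega
      have hjn : (π j : ℕ) < n := (π j).isLt
      rcases htri with h | h | h | h
      · exact h00 ⟨j, by omega⟩
      · exact h01' ⟨j, by omega⟩
      · exact h02 ⟨j, by omega⟩
      · exact h03 ⟨j, by omega⟩
    refine ⟨hi0, Fin.lt_def.mpr h12, Fin.lt_def.mpr hv01, Fin.lt_def.mpr hv12, ?_⟩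
    intro j hj hne ⟨ha, hb⟩
    have hj' : (i 1 : ℕ) < j := Fin.lt_def.mp hj
    have hne' : (j : ℕ) ≠ i 2 := fun h => hne (Fin.val_injective h)
    have ha' : (π (i 0) : ℕ) < π j := Fin.lt_def.mp ha
    have hb' : (π j : ℕ) < π (i 2) := Fin.lt_def.mp hb
    have dv1 : (π j : ℕ) ≠ π (i 1) := by
      intro h
      have : j = i 1 := π.injective (Fin.val_injective h)
      have := congrArg Fin.val this
      omega
    have hcp : (j : ℕ) < i 2 ∨ (i 2 : ℕ) < j := by omega
    have hcv : (π j : ℕ) < π (i 1) ∨ (π (i 1) : ℕ) < π j := by omega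
    rcases hcp with hp | hp <;> rcases hcv with hv | hv
    · exact h21 ⟨j, by omega⟩
    · exact h22 ⟨j, by omega⟩
    · exact h31 ⟨j, by omega⟩
    · exact h32 ⟨j, by omega⟩
  · rintro ⟨hi0, h12, hv01, hv12, hall⟩
    have hv01' := Fin.lt_def.mp hv01
    have hv12' := Fin.lt_def.mp hv12
    have h12' := Fin.lt_def.mp h12
    have h01 : i 0 < i 1 := by
      rw [Fin.lt_def, hi0]
      rcases Nat.eq_zero_or_pos (i 1 : ℕ) with h | h
      · exfalso
        have : i 1 = i 0 := Fin.val_injective (by omega)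
        rw [this] at hv01'; omega
      · exact h
    have hmono : StrictMono i := strictMono_fin3 h01 h12
    have hf : StrictMono (fun a => π (i a)) := strictMono_fin3 hv01 hv12
    refine ⟨hmono, fun a b => by rw [hf.lt_iff_lt]; exact Iff.rfl, ?_⟩
    intro a b hab
    simp only [Rset, Set.mem_insert_iff, Set.mem_singleton_iff, Prod.mk.injEq] at hab
    rintro ⟨j, hj1, hj2, hj3, hj4⟩
    have hj1' := hj1; have hj2' := hj2
    rcases hab with ⟨rfl, rfl⟩ | ⟨rfl, rfl⟩ | ⟨rfl, rfl⟩ | ⟨rfl, rfl⟩ | ⟨rfl, rfl⟩ | ⟨rfl, rfl⟩ | ⟨rfl, rfl⟩ | ⟨rfl, rfl⟩ <;>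
      simp only [e1, e2, e3, e4, posExt_0, posExt_1, posExt_2, posExt_3, posExt_4,
        valExt123_0, valExt123_1, valExt123_2, valExt123_3, valExt123_4] at hj1 hj2 hj3 hj4
    · omega
    · omega
    · omega
    · omega
    · -- (2,1): i1 < j < i2, u0 < πj < u1
      exact hall j (Fin.lt_def.mpr (by omega)) (fun h => by rw [h] at hj2; omega)
        ⟨Fin.lt_def.mpr (by omega), Fin.lt_def.mpr (by omega)⟩
    · exact hall j (Fin.lt_def.mpr (by omega)) (fun h => by rw [h] at hj2; omega)
        ⟨Fin.lt_def.mpr (by omega), Fin.lt_def.mpr (by omega)⟩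
    · exact hall j (Fin.lt_def.mpr (by omega)) (fun h => by rw [h] at hj1; omega)
        ⟨Fin.lt_def.mpr (by omega), Fin.lt_def.mpr (by omega)⟩
    · exact hall j (Fin.lt_def.mpr (by omega)) (fun h => by rw [h] at hj1; omega)
        ⟨Fin.lt_def.mpr (by omega), Fin.lt_def.mpr (by omega)⟩

lemma mesh132_iff {n : ℕ} (π : Equiv.Perm (Fin n)) (i : Fin 3 → Fin n) :
    IsMeshOcc perm132 Rset π i ↔
      ((i 0 : ℕ) = 0 ∧ i 1 < i 2 ∧ π (i 0) < π (i 2) ∧ π (i 2) < π (i 1) ∧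
        ∀ j : Fin n, i 1 < j → j ≠ i 2 → ¬(π (i 0) < π j ∧ π j < π (i 1))) := by
  have e1 : (0:ℕ) + 1 = 1 := rfl
  have e2 : (1:ℕ) + 1 = 2 := rfl
  have e3 : (2:ℕ) + 1 = 3 := rfl
  have e4 : (3:ℕ) + 1 = 4 := rfl
  constructor
  · rintro ⟨hmono, hpat, hshade⟩
    have h01 : (i 0 : ℕ) < i 1 := hmono (show (0:Fin 3) < 1 by decide)
    have h12 : (i 1 : ℕ) < i 2 := hmono (show (1:Fin 3) < 2 by decide)
    have hv02 : (π (i 0) : ℕ) < π (i 2) := (hpat 0 2).mpr (by decide)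
    have hv21 : (π (i 2) : ℕ) < π (i 1) := (hpat 2 1).mpr (by decide)
    have h00 := hshade 0 0 (mem_Rset _ (by tauto))
    have h01' := hshade 0 1 (mem_Rset _ (by tauto))
    have h02 := hshade 0 2 (mem_Rset _ (by tauto))
    have h03 := hshade 0 3 (mem_Rset _ (by tauto))
    have h21 := hshade 2 1 (mem_Rset _ (by tauto))
    have h22 := hshade 2 2 (mem_Rset _ (by tauto))
    have h31 := hshade 3 1 (mem_Rset _ (by tauto))
    have h32 := hshade 3 2 (mem_Rset _ (by tauto))
    simp only [e1, e2, e3, e4, posExt_0, posExt_1, posExt_2, posExt_3, posExt_4, valExt132_0, valExt132_1, valExt132_2, valExt132_3, valExt132_4] at h00 h01' h02 h03 h21 h22 h31 h32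
    have hi0 : (i 0 : ℕ) = 0 := by
      by_contra h0
      have hn : 0 < n := (i 0).pos
      set j : Fin n := ⟨0, hn⟩ with hjdef
      have hj0 : (j : ℕ) = 0 := rfl
      have d0 : (π j : ℕ) ≠ π (i 0) := by
        intro h
        have : j = i 0 := π.injective (Fin.val_injective h)
        apply h0; rw [← this]
      have d1 : (π j : ℕ) ≠ π (i 1) := by
        intro h
        have : j = i 1 := π.injective (Fin.val_injective h)
        have := congrArg Fin.val this
        omega
      have d2 : (π j : ℕ) ≠ π (i 2) := by
        intro h
        have : j = i 2 := π.injective (Fin.val_injective h)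
        have := congrArg Fin.val this
        omega
      have htri : (π j : ℕ) < π (i 0) ∨ ((π (i 0) : ℕ) < π j ∧ (π j : ℕ) < π (i 2)) ∨
          ((π (i 2) : ℕ) < π j ∧ (π j : ℕ) < π (i 1)) ∨ (π (i 1) : ℕ) < π j := by omega
      have hjn : (π j : ℕ) < n := (π j).isLt
      rcases htri with h | h | h | h
      · exact h00 ⟨j, by omega⟩
      · exact h01' ⟨j, by omega⟩
      · exact h02 ⟨j, by omega⟩
      · exact h03 ⟨j, by omega⟩
    refine ⟨hi0, Fin.lt_def.mpr h12, Fin.lt_def.mpr hv02, Fin.lt_def.mpr hv21, ?_⟩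
    intro j hj hne ⟨ha, hb⟩
    have hj' : (i 1 : ℕ) < j := Fin.lt_def.mp hj
    have hne' : (j : ℕ) ≠ i 2 := fun h => hne (Fin.val_injective h)
    have ha' : (π (i 0) : ℕ) < π j := Fin.lt_def.mp ha
    have hb' : (π j : ℕ) < π (i 1) := Fin.lt_def.mp hb
    have dv2 : (π j : ℕ) ≠ π (i 2) := by
      intro h
      have : j = i 2 := π.injective (Fin.val_injective h)
      have := congrArg Fin.val this
      omega
    have hcp : (j : ℕ) < i 2 ∨ (i 2 : ℕ) < j := by omega
    have hcv : (π j : ℕ) < π (i 2) ∨ (π (i 2) : ℕ) < π j := by omega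
    rcases hcp with hp | hp <;> rcases hcv with hv | hv
    · exact h21 ⟨j, by omega⟩
    · exact h22 ⟨j, by omega⟩
    · exact h31 ⟨j, by omega⟩
    · exact h32 ⟨j, by omega⟩
  · rintro ⟨hi0, h12, hv02, hv21, hall⟩
    have hv02' := Fin.lt_def.mp hv02
    have hv21' := Fin.lt_def.mp hv21
    have h12' := Fin.lt_def.mp h12
    have h01 : i 0 < i 1 := by
      rw [Fin.lt_def, hi0]
      rcases Nat.eq_zero_or_pos (i 1 : ℕ) with h | h
      · exfalso
        have : i 1 = i 0 := Fin.val_injective (by omega)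
        rw [this] at hv21'; omega
      · exact h
    have hmono : StrictMono i := strictMono_fin3 h01 h12
    have hf : StrictMono (fun a => π (i (perm132.symm a))) := by
      apply strictMono_fin3
      · show π (i (perm132.symm 0)) < π (i (perm132.symm 1))
        have : perm132.symm 0 = 0 := by decide
        have h2 : perm132.symm 1 = 2 := by decide
        rw [this, h2]; exact hv02
      · show π (i (perm132.symm 1)) < π (i (perm132.symm 2))
        have : perm132.symm 1 = 2 := by decide
        have h2 : perm132.symm 2 = 1 := by decide
        rw [this, h2]; exact hv21
    refine ⟨hmono, fun a b => ?_, ?_⟩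
    · have := hf.lt_iff_lt (a := perm132 a) (b := perm132 b)
      simpa using this
    intro a b hab
    simp only [Rset, Set.mem_insert_iff, Set.mem_singleton_iff, Prod.mk.injEq] at hab
    rintro ⟨j, hj1, hj2, hj3, hj4⟩
    rcases hab with ⟨rfl, rfl⟩ | ⟨rfl, rfl⟩ | ⟨rfl, rfl⟩ | ⟨rfl, rfl⟩ | ⟨rfl, rfl⟩ | ⟨rfl, rfl⟩ | ⟨rfl, rfl⟩ | ⟨rfl, rfl⟩ <;>
      simp only [e1, e2, e3, e4, posExt_0, posExt_1, posExt_2, posExt_3, posExt_4,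
        valExt132_0, valExt132_1, valExt132_2, valExt132_3, valExt132_4] at hj1 hj2 hj3 hj4
    · omega
    · omega
    · omega
    · omega
    · exact hall j (Fin.lt_def.mpr (by omega)) (fun h => by rw [h] at hj2; omega)
        ⟨Fin.lt_def.mpr (by omega), Fin.lt_def.mpr (by omega)⟩
    · exact hall j (Fin.lt_def.mpr (by omega)) (fun h => by rw [h] at hj2; omega)
        ⟨Fin.lt_def.mpr (by omega), Fin.lt_def.mpr (by omega)⟩
    · exact hall j (Fin.lt_def.mpr (by omega)) (fun h => by rw [h] at hj1; omega)
        ⟨Fin.lt_def.mpr (by omega), Fin.lt_def.mpr (by omega)⟩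
    · exact hall j (Fin.lt_def.mpr (by omega)) (fun h => by rw [h] at hj1; omega)
        ⟨Fin.lt_def.mpr (by omega), Fin.lt_def.mpr (by omega)⟩

section Stats
variable {n : ℕ} [NeZero n]

/-- Number of entries after the position of value `M` with value strictly between `π 0` and `M`. -/
def UT (π : Equiv.Perm (Fin n)) (M : Fin n) : ℕ :=
  #(univ.filter fun j : Fin n => π.symm M < j ∧ π 0 < π j ∧ π j < M)

def Kst (π : Equiv.Perm (Fin n)) : ℕ :=
  #(univ.filter fun M : Fin n => (π 0 : ℕ) + 2 ≤ (M : ℕ) ∧ UT π M = 0)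

def Lst (π : Equiv.Perm (Fin n)) : ℕ :=
  #(univ.filter fun M : Fin n => UT π M = 1)

lemma UT_eq_zero_iff (π : Equiv.Perm (Fin n)) (M : Fin n) :
    UT π M = 0 ↔ ∀ j : Fin n, ¬(π.symm M < j ∧ π 0 < π j ∧ π j < M) := by
  rw [UT, card_eq_zero, filter_eq_empty_iff]
  simp

lemma occ123_eq (π : Equiv.Perm (Fin n)) : occ perm123 Rset π = Kst π := by
  classical
  have hF : ∀ x : {i : Fin 3 → Fin n // IsMeshOcc perm123 Rset π i},
      (π 0 : ℕ) + 2 ≤ (π (x.1 2) : ℕ) ∧ UT π (π (x.1 2)) = 0 := by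
    rintro ⟨i, h⟩
    show (π 0 : ℕ) + 2 ≤ (π (i 2) : ℕ) ∧ UT π (π (i 2)) = 0
    obtain ⟨hi0, h12, hv01, hv12, hall⟩ := (mesh123_iff π i).mp h
    have hi0' : i 0 = 0 := Fin.val_injective (by simpa using hi0)
    have hv01' : (π 0 : ℕ) < π (i 1) := by rw [← hi0']; exact hv01
    have hv12' : (π (i 1) : ℕ) < π (i 2) := hv12
    constructor
    · omega
    · rw [UT_eq_zero_iff]
      rintro j ⟨hj1, hj2, hj3⟩
      rw [Equiv.symm_apply_apply] at hj1
      exact hall j (h12.trans hj1) (ne_of_gt hj1) ⟨by rwa [hi0'], hj3⟩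
  let F : {i : Fin 3 → Fin n // IsMeshOcc perm123 Rset π i} →
      {M : Fin n // (π 0 : ℕ) + 2 ≤ (M : ℕ) ∧ UT π M = 0} := fun x => ⟨π (x.1 2), hF x⟩
  have hinj : Function.Injective F := by
    rintro ⟨i, hi⟩ ⟨i', hi'⟩ hFeq
    have hM : π (i 2) = π (i' 2) := congrArg Subtype.val hFeq
    have h2 : i 2 = i' 2 := π.injective hM
    obtain ⟨hi0, h12, hv01, hv12, hall⟩ := (mesh123_iff π i).mp hi
    obtain ⟨hi0'', h12', hv01'', hv12', hall'⟩ := (mesh123_iff π i').mp hi'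
    have hI0 : i 0 = 0 := Fin.val_injective (by simpa using hi0)
    have hI0' : i' 0 = 0 := Fin.val_injective (by simpa using hi0'')
    have h1 : i 1 = i' 1 := by
      rcases lt_trichotomy (i 1) (i' 1) with h | h | h
      · exfalso
        refine hall (i' 1) h (fun hc => ?_) ⟨?_, ?_⟩
        · rw [hc, ← h2] at h12'
          exact lt_irrefl _ h12'
        · rw [hI0, ← hI0']; exact hv01''
        · rw [h2]; exact hv12'
      · exact h
      · exfalso
        refine hall' (i 1) h (fun hc => ?_) ⟨?_, ?_⟩
        · rw [hc, h2] at h12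
          exact lt_irrefl _ h12
        · rw [hI0', ← hI0]; exact hv01
        · rw [← h2]; exact hv12
    apply Subtype.ext
    show i = i'
    funext a
    fin_cases a
    · show i 0 = i' 0
      rw [hI0, hI0']
    · show i 1 = i' 1
      exact h1
    · show i 2 = i' 2
      exact h2
  have hsur : Function.Surjective F := by
    rintro ⟨M, hM1, hM2⟩
    set A : Finset (Fin n) := univ.filter (fun j => π 0 < π j ∧ π j < M) with hA
    have hMn : (M : ℕ) < n := M.isLt
    have hAne : A.Nonempty := by
      refine ⟨π.symm ⟨(M : ℕ) - 1, by omega⟩, ?_⟩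
      rw [hA, mem_filter]
      refine ⟨mem_univ _, ?_, ?_⟩
      · rw [Equiv.apply_symm_apply, Fin.lt_def]
        simp only
        omega
      · rw [Equiv.apply_symm_apply, Fin.lt_def]
        simp only
        omega
    set i1 : Fin n := A.max' hAne with hi1def
    have hi1A : π 0 < π i1 ∧ π i1 < M := by
      have h' : i1 ∈ filter (fun j => π 0 < π j ∧ π j < M) univ := A.max'_mem hAne
      exact (mem_filter.mp h').2
    set i2 : Fin n := π.symm M with hi2def
    have hπi2 : π i2 = M := Equiv.apply_symm_apply π M
    have hUT := (UT_eq_zero_iff π M).mp hM2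
    have h12 : i1 < i2 := by
      rcases lt_trichotomy i1 i2 with h | h | h
      · exact h
      · exfalso
        have := hi1A.2
        rw [h, hπi2] at this
        exact lt_irrefl _ this
      · exact absurd ⟨h, hi1A.1, hi1A.2⟩ (hUT i1)
    refine ⟨⟨![0, i1, i2], ?_⟩, ?_⟩
    · rw [mesh123_iff]
      refine ⟨?_, ?_, ?_, ?_, ?_⟩
      · show ((0 : Fin n) : ℕ) = 0
        simp
      · show i1 < i2
        exact h12
      · show π 0 < π i1
        exact hi1A.1
      · show π i1 < π i2
        rw [hπi2]
        exact hi1A.2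
      · show ∀ j : Fin n, i1 < j → j ≠ i2 → ¬(π 0 < π j ∧ π j < π i2)
        rintro j hj hne ⟨ha, hb⟩
        rw [hπi2] at hb
        have hjA : j ∈ A := by
          rw [hA, mem_filter]
          exact ⟨mem_univ _, ha, hb⟩
        exact absurd (A.le_max' j hjA) (not_le.mpr hj)
    · apply Subtype.ext
      show π (![0, i1, i2] 2) = M
      show π i2 = M
      exact hπi2
  rw [occ, Kst, Nat.card_congr (Equiv.ofBijective F ⟨hinj, hsur⟩), Nat.card_eq_fintype_card]
  exact Fintype.card_subtype _

lemma UT_eq_one_iff (π : Equiv.Perm (Fin n)) (M : Fin n) :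
    UT π M = 1 ↔ ∃ j0 : Fin n, (π.symm M < j0 ∧ π 0 < π j0 ∧ π j0 < M) ∧
      ∀ j : Fin n, (π.symm M < j ∧ π 0 < π j ∧ π j < M) → j = j0 := by
  rw [UT, card_eq_one]
  constructor
  · rintro ⟨j0, hj0⟩
    have hj0m : j0 ∈ filter (fun j : Fin n => π.symm M < j ∧ π 0 < π j ∧ π j < M) univ := by
      rw [hj0]; exact mem_singleton_self j0
    refine ⟨j0, (mem_filter.mp hj0m).2, fun j hj => ?_⟩
    have : j ∈ filter (fun j : Fin n => π.symm M < j ∧ π 0 < π j ∧ π j < M) univ :=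
      mem_filter.mpr ⟨mem_univ _, hj⟩
    rw [hj0] at this
    exact mem_singleton.mp this
  · rintro ⟨j0, hj0, huniq⟩
    refine ⟨j0, ?_⟩
    apply Finset.eq_singleton_iff_unique_mem.mpr
    refine ⟨mem_filter.mpr ⟨mem_univ _, hj0⟩, fun j hj => huniq j (mem_filter.mp hj).2⟩

lemma occ132_eq (π : Equiv.Perm (Fin n)) : occ perm132 Rset π = Lst π := by
  classical
  have hF : ∀ x : {i : Fin 3 → Fin n // IsMeshOcc perm132 Rset π i},
      UT π (π (x.1 1)) = 1 := by
    rintro ⟨i, h⟩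
    show UT π (π (i 1)) = 1
    obtain ⟨hi0, h12, hv02, hv21, hall⟩ := (mesh132_iff π i).mp h
    have hi0' : i 0 = 0 := Fin.val_injective (by simpa using hi0)
    rw [UT_eq_one_iff]
    refine ⟨i 2, ⟨?_, ?_, ?_⟩, ?_⟩
    · rw [Equiv.symm_apply_apply]; exact h12
    · rw [← hi0']; exact hv02
    · exact hv21
    · rintro j ⟨hj1, hj2, hj3⟩
      rw [Equiv.symm_apply_apply] at hj1
      by_contra hne
      exact hall j hj1 hne ⟨by rwa [hi0'], hj3⟩
  let F : {i : Fin 3 → Fin n // IsMeshOcc perm132 Rset π i} →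
      {M : Fin n // UT π M = 1} := fun x => ⟨π (x.1 1), hF x⟩
  have hinj : Function.Injective F := by
    rintro ⟨i, hi⟩ ⟨i', hi'⟩ hFeq
    have hM : π (i 1) = π (i' 1) := congrArg Subtype.val hFeq
    have h1 : i 1 = i' 1 := π.injective hM
    obtain ⟨hi0, h12, hv02, hv21, hall⟩ := (mesh132_iff π i).mp hi
    obtain ⟨hi0'', h12', hv02', hv21', hall'⟩ := (mesh132_iff π i').mp hi'
    have hI0 : i 0 = 0 := Fin.val_injective (by simpa using hi0)
    have hI0' : i' 0 = 0 := Fin.val_injective (by simpa using hi0'')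
    have h2 : i 2 = i' 2 := by
      by_contra hne
      have hx : i 1 < i' 2 := by rw [h1]; exact h12'
      have := hall (i' 2) hx (fun hc => hne hc.symm)
        ⟨by rw [hI0, ← hI0']; exact hv02', by rw [hM]; exact hv21'⟩
      exact this
    apply Subtype.ext
    show i = i'
    funext a
    fin_cases a
    · show i 0 = i' 0
      rw [hI0, hI0']
    · show i 1 = i' 1
      exact h1
    · show i 2 = i' 2
      exact h2
  have hsur : Function.Surjective F := by
    rintro ⟨M, hM⟩
    obtain ⟨j0, ⟨hj1, hj2, hj3⟩, huniq⟩ := (UT_eq_one_iff π M).mp hM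
    have hπi1 : π (π.symm M) = M := Equiv.apply_symm_apply π M
    refine ⟨⟨![0, π.symm M, j0], ?_⟩, ?_⟩
    · rw [mesh132_iff]
      refine ⟨?_, ?_, ?_, ?_, ?_⟩
      · show ((0 : Fin n) : ℕ) = 0
        simp
      · show π.symm M < j0
        exact hj1
      · show π 0 < π j0
        exact hj2
      · show π j0 < π (π.symm M)
        rw [hπi1]; exact hj3
      · show ∀ j : Fin n, π.symm M < j → j ≠ j0 → ¬(π 0 < π j ∧ π j < π (π.symm M))
        rintro j hj hne ⟨ha, hb⟩
        rw [hπi1] at hb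
        exact hne (huniq j ⟨hj, ha, hb⟩)
    · apply Subtype.ext
      show π (![(0 : Fin n), π.symm M, j0] 1) = M
      show π (π.symm M) = M
      exact hπi1
  rw [occ, Lst, Nat.card_congr (Equiv.ofBijective F ⟨hinj, hsur⟩), Nat.card_eq_fintype_card]
  exact Fintype.card_subtype _

end Stats

-- SECTION 3
lemma succAbove_val {m : ℕ} (a : Fin (m+1)) (x : Fin m) :
    ((a.succAbove x : Fin (m+1)) : ℕ) = if (x:ℕ) < (a:ℕ) then (x:ℕ) else (x:ℕ)+1 := by
  rw [Fin.succAbove]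
  split_ifs with h1 h2 h2 <;> simp_all [Fin.lt_def, Fin.castSucc, Fin.val_succ]

lemma card_filter_succAbove {m : ℕ} (v : Fin (m+1)) (Q : Fin (m+1) → Prop) [DecidablePred Q] :
    #(univ.filter Q) = (if Q v then 1 else 0) + #(univ.filter fun x : Fin m => Q (v.succAbove x)) := by
  rw [Fin.univ_succAbove m v, filter_cons]
  split_ifs with h
  · rw [card_cons, Finset.filter_map, card_map]
    rw [Nat.add_comm]
    rfl
  · rw [Finset.filter_map, card_map]
    rw [Nat.zero_add]
    rfl

def Tst {m : ℕ} (a : ℕ) (τ : Equiv.Perm (Fin m)) (w : Fin m) : ℕ :=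
  #(univ.filter fun j : Fin m => τ.symm w < j ∧ a ≤ (τ j : ℕ) ∧ (τ j : ℕ) < (w : ℕ))

def Kpat {m : ℕ} (a : ℕ) (τ : Equiv.Perm (Fin m)) : ℕ :=
  #(univ.filter fun w : Fin m => a + 1 ≤ (w:ℕ) ∧ Tst a τ w = 0)

def Lpat {m : ℕ} (a : ℕ) (τ : Equiv.Perm (Fin m)) : ℕ :=
  #(univ.filter fun w : Fin m => Tst a τ w = 1)

section S1
variable {m : ℕ} (a : Fin (m+1)) (τ : Equiv.Perm (Fin m))

lemma UT_ins0_succAbove (w : Fin m) :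
    UT (insPerm 0 a τ) (a.succAbove w) = Tst (a : ℕ) τ w := by
  rw [UT, Tst, card_filter_succAbove (0 : Fin (m+1)), if_neg (by simp), Nat.zero_add]
  apply congrArg
  apply filter_congr
  intro j _
  simp only [mem_univ, insPerm_symm_succAbove, insPerm_apply_succAbove, insPerm_apply_same]
  have h1 : (0 : Fin (m+1)).succAbove (τ.symm w) < (0 : Fin (m+1)).succAbove j ↔ τ.symm w < j :=
    Fin.succAbove_lt_succAbove_iff
  have h2 : a < a.succAbove (τ j) ↔ (a : ℕ) ≤ ((τ j : Fin m) : ℕ) := by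
    rw [Fin.lt_def, succAbove_val]
    split_ifs with h <;> omega
  have h3 : a.succAbove (τ j) < a.succAbove w ↔ ((τ j : Fin m) : ℕ) < (w : ℕ) := by
    rw [Fin.succAbove_lt_succAbove_iff, Fin.lt_def]
  rw [h1, h2, h3]

lemma UT_ins0_same : UT (insPerm 0 a τ) a = 0 := by
  rw [UT, card_eq_zero, filter_eq_empty_iff]
  intro j _
  rw [insPerm_apply_same]
  rintro ⟨-, h2, h3⟩
  exact absurd (h2.trans h3) (lt_irrefl _)

lemma Kst_ins0 : Kst (insPerm 0 a τ) = Kpat (a : ℕ) τ := by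
  rw [Kst, Kpat, card_filter_succAbove a, if_neg (by simp [insPerm_apply_same]), Nat.zero_add]
  apply congrArg
  apply filter_congr
  intro w _
  rw [insPerm_apply_same, UT_ins0_succAbove]
  have hsv := succAbove_val a w
  constructor
  · rintro ⟨h1, h2⟩
    refine ⟨by split_ifs at hsv <;> omega, h2⟩
  · rintro ⟨h1, h2⟩
    refine ⟨by split_ifs at hsv <;> omega, h2⟩

lemma Lst_ins0 : Lst (insPerm 0 a τ) = Lpat (a : ℕ) τ := by
  rw [Lst, Lpat, card_filter_succAbove a, if_neg (by simp [UT_ins0_same]), Nat.zero_add]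
  apply congrArg
  apply filter_congr
  intro w _
  rw [UT_ins0_succAbove]

end S1

section S2
variable {m : ℕ} (p : Fin (m+1)) (a : ℕ) (τ : Equiv.Perm (Fin m))

lemma Tst_insBot_succAbove (w : Fin m) :
    Tst (a + 1) (insPerm p 0 τ) ((0 : Fin (m+1)).succAbove w) = Tst a τ w := by
  rw [Tst, Tst, card_filter_succAbove p]
  rw [if_neg (by rw [insPerm_apply_same]; rintro ⟨-, h2, -⟩; simp at h2), Nat.zero_add]
  apply congrArg
  apply filter_congr
  intro j _
  simp only [mem_univ, insPerm_symm_succAbove, insPerm_apply_succAbove]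
  have h1 : p.succAbove (τ.symm w) < p.succAbove j ↔ τ.symm w < j :=
    Fin.succAbove_lt_succAbove_iff
  have h2 : ((0 : Fin (m+1)).succAbove (τ j) : ℕ) = (τ j : ℕ) + 1 := by
    rw [Fin.zero_succAbove, Fin.val_succ]
  have h3 : ((0 : Fin (m+1)).succAbove w : ℕ) = (w : ℕ) + 1 := by
    rw [Fin.zero_succAbove, Fin.val_succ]
  rw [h1, h2, h3]
  constructor
  · rintro ⟨u1, u2, u3⟩; exact ⟨u1, by omega, by omega⟩
  · rintro ⟨u1, u2, u3⟩; exact ⟨u1, by omega, by omega⟩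

lemma Tst_insBot_zero : Tst (a + 1) (insPerm p 0 τ) 0 = 0 := by
  rw [Tst, card_eq_zero, filter_eq_empty_iff]
  intro j _
  rintro ⟨-, -, h3⟩
  simp at h3

lemma Kpat_insBot : Kpat (a + 1) (insPerm p 0 τ) = Kpat a τ := by
  rw [Kpat, Kpat, card_filter_succAbove (0 : Fin (m+1)), if_neg (by simp), Nat.zero_add]
  apply congrArg
  apply filter_congr
  intro w _
  rw [Tst_insBot_succAbove]
  have h3 : ((0 : Fin (m+1)).succAbove w : ℕ) = (w : ℕ) + 1 := by
    rw [Fin.zero_succAbove, Fin.val_succ]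
  rw [h3]
  constructor
  · rintro ⟨u1, u2⟩; exact ⟨by omega, u2⟩
  · rintro ⟨u1, u2⟩; exact ⟨by omega, u2⟩

lemma Lpat_insBot : Lpat (a + 1) (insPerm p 0 τ) = Lpat a τ := by
  rw [Lpat, Lpat, card_filter_succAbove (0 : Fin (m+1)),
    if_neg (by rw [Tst_insBot_zero]; omega), Nat.zero_add]
  apply congrArg
  apply filter_congr
  intro w _
  rw [Tst_insBot_succAbove]

end S2

section S3
variable {m : ℕ} (p : Fin (m+1)) (τ : Equiv.Perm (Fin m))

lemma Tst_insTop_succAbove (w : Fin m) :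
    Tst 0 (insPerm p (Fin.last m) τ) ((Fin.last m).succAbove w) = Tst 0 τ w := by
  rw [Tst, Tst, card_filter_succAbove p]
  rw [if_neg (by
    rintro ⟨-, -, h3⟩
    rw [insPerm_apply_same, Fin.succAbove_last] at h3
    simp only [Fin.val_last, Fin.coe_castSucc] at h3
    have := w.isLt
    omega), Nat.zero_add]
  apply congrArg
  apply filter_congr
  intro j _
  simp only [mem_univ, insPerm_symm_succAbove, insPerm_apply_succAbove]
  have h1 : p.succAbove (τ.symm w) < p.succAbove j ↔ τ.symm w < j :=
    Fin.succAbove_lt_succAbove_iff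
  have h2 : ((Fin.last m).succAbove (τ j) : ℕ) = (τ j : ℕ) := by
    rw [Fin.succAbove_last, Fin.coe_castSucc]
  have h3 : ((Fin.last m).succAbove w : ℕ) = (w : ℕ) := by
    rw [Fin.succAbove_last, Fin.coe_castSucc]
  rw [h1, h2, h3]

lemma Tst_insTop_last : Tst 0 (insPerm p (Fin.last m) τ) (Fin.last m) = m - (p : ℕ) := by
  rw [Tst]
  have : (univ.filter fun j : Fin (m+1) =>
      (insPerm p (Fin.last m) τ).symm (Fin.last m) < j ∧ 0 ≤ ((insPerm p (Fin.last m) τ) j : ℕ) ∧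
        (((insPerm p (Fin.last m) τ) j : Fin (m+1)) : ℕ) < ((Fin.last m : Fin (m+1)) : ℕ)) =
      univ.filter (fun j : Fin (m+1) => p < j) := by
    apply filter_congr
    intro j _
    rw [insPerm_symm_same]
    constructor
    · rintro ⟨h1, -⟩; exact h1
    · intro h1
      refine ⟨h1, Nat.zero_le _, ?_⟩
      have hne : insPerm p (Fin.last m) τ j ≠ Fin.last m := by
        intro hc
        have : j = p := by
          apply (insPerm p (Fin.last m) τ).injective
          rw [hc, insPerm_apply_same]
        rw [this] at h1
        exact lt_irrefl _ h1
      have h4 : ((insPerm p (Fin.last m) τ) j : ℕ) < m + 1 := Fin.isLt _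
      have h5 : ((insPerm p (Fin.last m) τ) j : ℕ) ≠ m := by
        intro hc
        apply hne
        apply Fin.val_injective
        rw [hc, Fin.val_last]
      rw [Fin.val_last]
      omega
  rw [this]
  have : (univ.filter fun j : Fin (m+1) => p < j) = Ioi p := by
    ext x; simp [mem_Ioi]
  rw [this, Fin.card_Ioi]
  omega

lemma Kpat_insTop (hm : 1 ≤ m) :
    Kpat 0 (insPerm p (Fin.last m) τ) = (if (p : ℕ) = m then 1 else 0) + Kpat 0 τ := by
  rw [Kpat, Kpat, card_filter_succAbove (Fin.last m)]
  have hlast : ((0:ℕ) + 1 ≤ ((Fin.last m : Fin (m+1)) : ℕ) ∧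
      Tst 0 (insPerm p (Fin.last m) τ) (Fin.last m) = 0) ↔ (p : ℕ) = m := by
    rw [Tst_insTop_last, Fin.val_last]
    have := p.isLt
    omega
  congr 1
  · rcases Nat.eq_zero_or_pos 1 with h | h
    · omega
    · by_cases hc : (p : ℕ) = m
      · rw [if_pos (hlast.mpr hc), if_pos hc]
      · rw [if_neg (fun hx => hc (hlast.mp hx)), if_neg hc]
  · apply congrArg
    apply filter_congr
    intro w _
    rw [Tst_insTop_succAbove]
    have h3 : (((Fin.last m).succAbove w : Fin (m+1)) : ℕ) = (w : ℕ) := by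
      rw [Fin.succAbove_last, Fin.coe_castSucc]
    rw [h3]

lemma Lpat_insTop (hm : 1 ≤ m) :
    Lpat 0 (insPerm p (Fin.last m) τ) = (if (p : ℕ) = m - 1 then 1 else 0) + Lpat 0 τ := by
  rw [Lpat, Lpat, card_filter_succAbove (Fin.last m)]
  have hlast : (Tst 0 (insPerm p (Fin.last m) τ) (Fin.last m) = 1) ↔ (p : ℕ) = m - 1 := by
    rw [Tst_insTop_last]
    have := p.isLt
    omega
  congr 1
  · by_cases hc : (p : ℕ) = m - 1
    · rw [if_pos (hlast.mpr hc), if_pos hc]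
    · rw [if_neg (fun hx => hc (hlast.mp hx)), if_neg hc]
  · apply congrArg
    apply filter_congr
    intro w _
    rw [Tst_insTop_succAbove]

end S3

section Tools

lemma natCard_subtype_comp {α β : Type*} (G : α → β) (hG : Function.Bijective G)
    (Q : β → Prop) : Nat.card {b // Q b} = Nat.card {a // Q (G a)} :=
  (Nat.card_congr (Equiv.subtypeEquiv (Equiv.ofBijective G hG) (fun _ => Iff.rfl))).symm

lemma natCard_prod_eq_sum {A B : Type*} [Fintype A] [Fintype B] (Q : A × B → Prop) :
    Nat.card {x : A × B // Q x} = ∑ a : A, Nat.card {b : B // Q (a, b)} := by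
  classical
  have e : {x : A × B // Q x} ≃ Σ a : A, {b : B // Q (a, b)} := {
    toFun := fun x => ⟨x.1.1, ⟨x.1.2, x.2⟩⟩
    invFun := fun y => ⟨(y.1, y.2.1), y.2.2⟩
    left_inv := fun ⟨⟨a, b⟩, h⟩ => rfl
    right_inv := fun ⟨a, ⟨b, h⟩⟩ => rfl }
  rw [Nat.card_congr e, Nat.card_eq_fintype_card, Fintype.card_sigma]
  exact Finset.sum_congr rfl (fun a _ => (Nat.card_eq_fintype_card).symm)

lemma natCard_prod_snd {A B : Type*} [Fintype A] [Fintype B] (Q : B → Prop) :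
    Nat.card {x : A × B // Q x.2} = Fintype.card A * Nat.card {b : B // Q b} := by
  have e : {x : A × B // Q x.2} ≃ A × {b : B // Q b} := {
    toFun := fun x => (x.1.1, ⟨x.1.2, x.2⟩)
    invFun := fun y => ⟨(y.1, y.2.1), y.2.2⟩
    left_inv := fun ⟨⟨a, b⟩, h⟩ => rfl
    right_inv := fun ⟨a, ⟨b, h⟩⟩ => rfl }
  rw [Nat.card_congr e, Nat.card_prod, Nat.card_eq_fintype_card]

lemma sum_ite_two (N i1 i2 A B C : ℕ) (h1 : i1 < N) (h2 : i2 < N) (hne : i1 ≠ i2) :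
    ∑ p ∈ Finset.range N, (if p = i1 then A else if p = i2 then B else C) =
      A + B + (N - 2) * C := by
  classical
  have hmem1 : i1 ∈ Finset.range N := Finset.mem_range.mpr h1
  rw [← Finset.sum_erase_add _ _ hmem1, if_pos rfl]
  have hmem2 : i2 ∈ (Finset.range N).erase i1 := Finset.mem_erase.mpr ⟨hne.symm, Finset.mem_range.mpr h2⟩
  rw [← Finset.sum_erase_add _ _ hmem2, if_neg hne.symm, if_pos rfl]
  have hconst : ∀ p ∈ ((Finset.range N).erase i1).erase i2,
      (if p = i1 then A else if p = i2 then B else C) = C := by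
    intro p hp
    rw [Finset.mem_erase, Finset.mem_erase] at hp
    rw [if_neg hp.2.1, if_neg hp.1]
  rw [Finset.sum_congr rfl hconst, Finset.sum_const, smul_eq_mul]
  rw [Finset.card_erase_of_mem hmem2, Finset.card_erase_of_mem hmem1, Finset.card_range]
  have hNN : N - 1 - 1 = N - 2 := by omega
  rw [hNN]
  ring

end Tools

-- SECTION 5 : counting

noncomputable def cntH (m a k ℓ : ℕ) : ℕ :=
  Nat.card {τ : Equiv.Perm (Fin m) // Kpat a τ = k ∧ Lpat a τ = ℓ}

lemma Kpat_fin0 (a : ℕ) (τ : Equiv.Perm (Fin 0)) : Kpat a τ = 0 := by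
  rw [Kpat]
  simp

lemma Lpat_fin0 (a : ℕ) (τ : Equiv.Perm (Fin 0)) : Lpat a τ = 0 := by
  rw [Lpat]
  simp

lemma Kpat_fin1 (a : ℕ) (τ : Equiv.Perm (Fin 1)) : Kpat a τ = 0 := by
  rw [Kpat, card_eq_zero, filter_eq_empty_iff]
  intro w _
  rintro ⟨h1, -⟩
  have := w.isLt
  omega

lemma Lpat_fin1 (a : ℕ) (τ : Equiv.Perm (Fin 1)) : Lpat a τ = 0 := by
  rw [Lpat, card_eq_zero, filter_eq_empty_iff]
  intro w _
  have hT : Tst a τ w = 0 := by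
    rw [Tst, card_eq_zero, filter_eq_empty_iff]
    intro j _
    rintro ⟨h1, -⟩
    rw [Fin.lt_def] at h1
    have h2 := j.isLt
    have h3 := (τ.symm w).isLt
    omega
  rw [hT]
  omega

lemma cntH_base0 (k ℓ : ℕ) : cntH 0 0 k ℓ = if k = 0 ∧ ℓ = 0 then 1 else 0 := by
  by_cases h : k = 0 ∧ ℓ = 0
  · obtain ⟨rfl, rfl⟩ := h
    rw [if_pos ⟨rfl, rfl⟩, cntH]
    have e : {τ : Equiv.Perm (Fin 0) // Kpat 0 τ = 0 ∧ Lpat 0 τ = 0} ≃ Equiv.Perm (Fin 0) :=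
      Equiv.subtypeUnivEquiv (fun τ => ⟨Kpat_fin0 0 τ, Lpat_fin0 0 τ⟩)
    rw [Nat.card_congr e, Nat.card_eq_fintype_card, Fintype.card_perm]
    simp
  · rw [if_neg h, cntH]
    haveI : IsEmpty {τ : Equiv.Perm (Fin 0) // Kpat 0 τ = k ∧ Lpat 0 τ = 0 + ℓ} := by
      constructor
      rintro ⟨τ, h1, h2⟩
      rw [Kpat_fin0] at h1
      rw [Lpat_fin0] at h2
      omega
    simp only [Nat.zero_add] at this
    exact Nat.card_of_isEmpty

lemma cntH_base1 (k ℓ : ℕ) : cntH 1 0 k ℓ = if k = 0 ∧ ℓ = 0 then 1 else 0 := by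
  by_cases h : k = 0 ∧ ℓ = 0
  · obtain ⟨rfl, rfl⟩ := h
    rw [if_pos ⟨rfl, rfl⟩, cntH]
    have e : {τ : Equiv.Perm (Fin 1) // Kpat 0 τ = 0 ∧ Lpat 0 τ = 0} ≃ Equiv.Perm (Fin 1) :=
      Equiv.subtypeUnivEquiv (fun τ => ⟨Kpat_fin1 0 τ, Lpat_fin1 0 τ⟩)
    rw [Nat.card_congr e, Nat.card_eq_fintype_card, Fintype.card_perm]
    simp
  · rw [if_neg h, cntH]
    haveI : IsEmpty {τ : Equiv.Perm (Fin 1) // Kpat 0 τ = k ∧ Lpat 0 τ = ℓ} := by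
      constructor
      rintro ⟨τ, h1, h2⟩
      rw [Kpat_fin1] at h1
      rw [Lpat_fin1] at h2
      exact h ⟨h1.symm, h2.symm⟩
    exact Nat.card_of_isEmpty

lemma cntH_succ (m a k ℓ : ℕ) : cntH (m+1) (a+1) k ℓ = (m+1) * cntH m a k ℓ := by
  rw [cntH, natCard_subtype_comp
    (fun x : Fin (m+1) × Equiv.Perm (Fin m) => insPerm x.1 0 x.2) (insPerm_bij_left 0)]
  have step : Nat.card {x : Fin (m+1) × Equiv.Perm (Fin m) //
      Kpat (a+1) (insPerm x.1 0 x.2) = k ∧ Lpat (a+1) (insPerm x.1 0 x.2) = ℓ} =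
      Nat.card {x : Fin (m+1) × Equiv.Perm (Fin m) // Kpat a x.2 = k ∧ Lpat a x.2 = ℓ} := by
    apply Nat.card_congr
    apply Equiv.subtypeEquiv (Equiv.refl _)
    intro x
    rw [Kpat_insBot, Lpat_insBot]
    exact Iff.rfl
  rw [step, natCard_prod_snd (fun τ : Equiv.Perm (Fin m) => Kpat a τ = k ∧ Lpat a τ = ℓ)]
  rw [Fintype.card_fin, cntH]

lemma cntH_desc (a m k ℓ : ℕ) (h : a ≤ m) :
    cntH m a k ℓ = m.descFactorial a * cntH (m - a) 0 k ℓ := by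
  induction a generalizing m with
  | zero => simp
  | succ a ih =>
    obtain ⟨m', rfl⟩ : ∃ m', m = m' + 1 := ⟨m - 1, by omega⟩
    rw [cntH_succ, ih m' (by omega), Nat.succ_descFactorial_succ]
    have h2 : m' + 1 - (a+1) = m' - a := by omega
    rw [h2]
    ring

lemma cntE_succ (m k ℓ : ℕ) (hm : 1 ≤ m) :
    cntH (m+1) 0 k ℓ = (if 1 ≤ k then cntH m 0 (k-1) ℓ else 0) +
      (if 1 ≤ ℓ then cntH m 0 k (ℓ-1) else 0) + (m-1) * cntH m 0 k ℓ := by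
  rw [cntH, natCard_subtype_comp
    (fun x : Fin (m+1) × Equiv.Perm (Fin m) => insPerm x.1 (Fin.last m) x.2)
    (insPerm_bij_left (Fin.last m))]
  rw [natCard_prod_eq_sum]
  have hcard : ∀ p : Fin (m+1), Nat.card {τ : Equiv.Perm (Fin m) //
      Kpat 0 (insPerm p (Fin.last m) τ) = k ∧ Lpat 0 (insPerm p (Fin.last m) τ) = ℓ} =
      (if (p:ℕ) = m then (if 1 ≤ k then cntH m 0 (k-1) ℓ else 0)
       else if (p:ℕ) = m - 1 then (if 1 ≤ ℓ then cntH m 0 k (ℓ-1) else 0)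
       else cntH m 0 k ℓ) := by
    intro p
    by_cases hp : (p:ℕ) = m
    · rw [if_pos hp]
      have hp1 : ¬((p:ℕ) = m - 1) := by omega
      by_cases hk : 1 ≤ k
      · rw [if_pos hk, cntH]
        apply Nat.card_congr
        apply Equiv.subtypeEquiv (Equiv.refl _)
        intro τ
        show _ ↔ (Kpat 0 τ = k - 1 ∧ Lpat 0 τ = ℓ)
        rw [Kpat_insTop p τ hm, Lpat_insTop p τ hm, if_pos hp, if_neg hp1]
        constructor
        · rintro ⟨h1, h2⟩; exact ⟨by omega, by omega⟩
        · rintro ⟨h1, h2⟩; exact ⟨by omega, by omega⟩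
      · rw [if_neg hk]
        haveI : IsEmpty {τ : Equiv.Perm (Fin m) //
            Kpat 0 (insPerm p (Fin.last m) τ) = k ∧ Lpat 0 (insPerm p (Fin.last m) τ) = ℓ} := by
          constructor
          rintro ⟨τ, h1, h2⟩
          rw [Kpat_insTop p τ hm, if_pos hp] at h1
          omega
        exact Nat.card_of_isEmpty
    · rw [if_neg hp]
      by_cases hp1 : (p:ℕ) = m - 1
      · rw [if_pos hp1]
        by_cases hl : 1 ≤ ℓ
        · rw [if_pos hl, cntH]
          apply Nat.card_congr
          apply Equiv.subtypeEquiv (Equiv.refl _)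
          intro τ
          show _ ↔ (Kpat 0 τ = k ∧ Lpat 0 τ = ℓ - 1)
          rw [Kpat_insTop p τ hm, Lpat_insTop p τ hm, if_neg hp, if_pos hp1]
          constructor
          · rintro ⟨h1, h2⟩; exact ⟨by omega, by omega⟩
          · rintro ⟨h1, h2⟩; exact ⟨by omega, by omega⟩
        · rw [if_neg hl]
          haveI : IsEmpty {τ : Equiv.Perm (Fin m) //
              Kpat 0 (insPerm p (Fin.last m) τ) = k ∧ Lpat 0 (insPerm p (Fin.last m) τ) = ℓ} := by
            constructor
            rintro ⟨τ, h1, h2⟩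
            rw [Lpat_insTop p τ hm, if_pos hp1] at h2
            omega
          exact Nat.card_of_isEmpty
      · rw [if_neg hp1, cntH]
        apply Nat.card_congr
        apply Equiv.subtypeEquiv (Equiv.refl _)
        intro τ
        show _ ↔ (Kpat 0 τ = k ∧ Lpat 0 τ = ℓ)
        rw [Kpat_insTop p τ hm, Lpat_insTop p τ hm, if_neg hp, if_neg hp1]
        simp
  rw [Finset.sum_congr rfl (fun p _ => hcard p)]
  rw [Fin.sum_univ_eq_sum_range (fun q =>
    (if q = m then (if 1 ≤ k then cntH m 0 (k-1) ℓ else 0)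
     else if q = m - 1 then (if 1 ≤ ℓ then cntH m 0 k (ℓ-1) else 0)
     else cntH m 0 k ℓ)) (m+1)]
  rw [sum_ite_two (m+1) m (m-1) _ _ _ (by omega) (by omega) (by omega)]
  have h2 : m + 1 - 2 = m - 1 := by omega
  rw [h2]

lemma stirling_zero_right (r : ℕ) : stirlingFirst r 0 = if r = 0 then 1 else 0 := by
  cases r with
  | zero => rfl
  | succ r => rfl

lemma stirling_succ (n t : ℕ) :
    stirlingFirst (n+1) (t+1) = n * stirlingFirst n (t+1) + stirlingFirst n t := rfl

lemma cntE_closed : ∀ m k ℓ : ℕ, cntH m 0 k ℓ = (k+ℓ).choose k * stirlingFirst (m-1) (k+ℓ) := by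
  intro m
  induction m with
  | zero =>
    intro k ℓ
    rw [cntH_base0]
    by_cases h : k = 0 ∧ ℓ = 0
    · obtain ⟨rfl, rfl⟩ := h
      simp [stirlingFirst]
    · rw [if_neg h]
      obtain ⟨t, ht'⟩ : ∃ t, k + ℓ = t + 1 := ⟨k + ℓ - 1, by omega⟩
      rw [ht']
      show 0 = (t+1).choose k * stirlingFirst (0-1) (t+1)
      rw [show (0:ℕ) - 1 = 0 from rfl]
      show 0 = (t+1).choose k * 0
      rw [mul_zero]
  | succ m ih =>
    intro k ℓ
    rcases Nat.eq_zero_or_pos m with rfl | hm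
    · rw [cntH_base1]
      by_cases h : k = 0 ∧ ℓ = 0
      · obtain ⟨rfl, rfl⟩ := h
        simp [stirlingFirst]
      · rw [if_neg h]
        obtain ⟨t, ht'⟩ : ∃ t, k + ℓ = t + 1 := ⟨k + ℓ - 1, by omega⟩
        rw [ht']
        show 0 = (t+1).choose k * stirlingFirst (1-1) (t+1)
        rw [show (1:ℕ) - 1 = 0 from rfl]
        show 0 = (t+1).choose k * 0
        rw [mul_zero]
    · obtain ⟨m', rfl⟩ : ∃ m', m = m' + 1 := ⟨m - 1, by omega⟩
      rw [cntE_succ _ k ℓ (by omega)]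
      have hsub : m' + 1 + 1 - 1 = m' + 1 := by omega
      have hsub2 : m' + 1 - 1 = m' := by omega
      rw [hsub]
      by_cases ht0 : k + ℓ = 0
      · obtain ⟨rfl, rfl⟩ : k = 0 ∧ ℓ = 0 := by omega
        rw [hsub2, ih 0 0, hsub2]
        simp only [Nat.add_zero, Nat.choose_zero_right, one_mul, Nat.zero_add]
        rw [stirling_zero_right, stirling_zero_right]
        rcases Nat.eq_zero_or_pos m' with rfl | hm'
        · simp
        · rw [if_neg (by omega), if_neg (by omega)]
          simp
      · obtain ⟨t, ht⟩ : ∃ t, k + ℓ = t + 1 := ⟨k + ℓ - 1, by omega⟩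
        rw [ht, stirling_succ]
        have key : (if 1 ≤ k then cntH (m'+1) 0 (k-1) ℓ else 0) +
            (if 1 ≤ ℓ then cntH (m'+1) 0 k (ℓ-1) else 0) =
            (t+1).choose k * stirlingFirst m' t := by
          rcases Nat.eq_zero_or_pos k with rfl | hk
          · rw [if_neg (by omega), if_pos (by omega), ih 0 (ℓ-1)]
            have h1 : 0 + (ℓ - 1) = t := by omega
            rw [h1, hsub2, Nat.choose_zero_right, Nat.choose_zero_right]
            omega
          · rcases Nat.eq_zero_or_pos ℓ with rfl | hl
            · rw [if_pos (show 1 ≤ k by omega), if_neg (show ¬(1 ≤ 0) by omega), ih (k-1) 0]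
              have h1 : k - 1 + 0 = t := by omega
              rw [h1, hsub2]
              have h2 : t.choose (k-1) = 1 := by
                have : k - 1 = t := by omega
                rw [this, Nat.choose_self]
              have h3 : (t+1).choose k = 1 := by
                have : k = t + 1 := by omega
                rw [this, Nat.choose_self]
              rw [h2, h3]
              omega
            · rw [if_pos (show 1 ≤ k by omega), if_pos (show 1 ≤ ℓ by omega), ih (k-1) ℓ, ih k (ℓ-1)]
              have h1 : k - 1 + ℓ = t := by omega
              have h2 : k + (ℓ - 1) = t := by omega
              rw [h1, h2, hsub2]
              obtain ⟨k', rfl⟩ : ∃ k', k = k' + 1 := ⟨k - 1, by omega⟩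
              have h3 : k' + 1 - 1 = k' := by omega
              rw [h3, Nat.choose_succ_succ t k']
              ring
        rw [key, ih k ℓ, ht, hsub2]
        ring

theorem statement_5 (n : ℕ) (hn : 2 ≤ n) (k ℓ : ℕ) :
    (k = 0 ∧ ℓ = 0 →
      Nat.card {π : Equiv.Perm (Fin n) //
          occ perm123 ({(0, 0), (0, 1), (0, 2), (0, 3), (2, 1), (2, 2), (3, 1), (3, 2)} : Set (ℕ × ℕ)) π = k ∧
          occ perm132 ({(0, 0), (0, 1), (0, 2), (0, 3), (2, 1), (2, 2), (3, 1), (3, 2)} : Set (ℕ × ℕ)) π = ℓ} =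
        2 * Nat.factorial (n - 1)) ∧
    (¬(k = 0 ∧ ℓ = 0) →
      Nat.card {π : Equiv.Perm (Fin n) //
          occ perm123 ({(0, 0), (0, 1), (0, 2), (0, 3), (2, 1), (2, 2), (3, 1), (3, 2)} : Set (ℕ × ℕ)) π = k ∧
          occ perm132 ({(0, 0), (0, 1), (0, 2), (0, 3), (2, 1), (2, 2), (3, 1), (3, 2)} : Set (ℕ × ℕ)) π = ℓ} =
        (k + ℓ).choose k *
          ∑ i ∈ Finset.Icc 2 (n - 1),
            (n - 1).choose i * Nat.factorial (n - 1 - i) * stirlingFirst (i - 1) (k + ℓ)) := by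
  obtain ⟨m, rfl⟩ : ∃ m, n = m + 1 := ⟨n - 1, by omega⟩
  have hm : 1 ≤ m := by omega
  have hR : ({(0, 0), (0, 1), (0, 2), (0, 3), (2, 1), (2, 2), (3, 1), (3, 2)} : Set (ℕ × ℕ)) =
      Rset := rfl
  have hmain : Nat.card {π : Equiv.Perm (Fin (m+1)) //
      occ perm123 ({(0, 0), (0, 1), (0, 2), (0, 3), (2, 1), (2, 2), (3, 1), (3, 2)} : Set (ℕ × ℕ)) π = k ∧
      occ perm132 ({(0, 0), (0, 1), (0, 2), (0, 3), (2, 1), (2, 2), (3, 1), (3, 2)} : Set (ℕ × ℕ)) π = ℓ} =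
      ∑ a ∈ Finset.range (m+1), m.descFactorial a * cntH (m - a) 0 k ℓ := by
    rw [hR]
    have e1 : Nat.card {π : Equiv.Perm (Fin (m+1)) //
        occ perm123 Rset π = k ∧ occ perm132 Rset π = ℓ} =
        Nat.card {π : Equiv.Perm (Fin (m+1)) // Kst π = k ∧ Lst π = ℓ} := by
      apply Nat.card_congr
      apply Equiv.subtypeEquiv (Equiv.refl _)
      intro π
      rw [occ123_eq, occ132_eq]
      exact Iff.rfl
    rw [e1, natCard_subtype_comp
      (fun x : Fin (m+1) × Equiv.Perm (Fin m) => insPerm 0 x.1 x.2) (insPerm_bij_right 0)]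
    have e2 : Nat.card {x : Fin (m+1) × Equiv.Perm (Fin m) //
        Kst (insPerm 0 x.1 x.2) = k ∧ Lst (insPerm 0 x.1 x.2) = ℓ} =
        Nat.card {x : Fin (m+1) × Equiv.Perm (Fin m) //
          Kpat (x.1 : ℕ) x.2 = k ∧ Lpat (x.1 : ℕ) x.2 = ℓ} := by
      apply Nat.card_congr
      apply Equiv.subtypeEquiv (Equiv.refl _)
      intro x
      rw [Kst_ins0, Lst_ins0]
      exact Iff.rfl
    rw [e2, natCard_prod_eq_sum
      (fun x : Fin (m+1) × Equiv.Perm (Fin m) => Kpat (x.1 : ℕ) x.2 = k ∧ Lpat (x.1 : ℕ) x.2 = ℓ)]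
    have e4 : (∑ a : Fin (m+1), Nat.card {b : Equiv.Perm (Fin m) //
        Kpat (((a, b).1 : Fin (m+1)) : ℕ) (a, b).2 = k ∧ Lpat (((a, b).1 : Fin (m+1)) : ℕ) (a, b).2 = ℓ}) =
        ∑ a : Fin (m+1), cntH m (a : ℕ) k ℓ :=
      Finset.sum_congr rfl (fun a _ => rfl)
    rw [e4, Fin.sum_univ_eq_sum_range (fun a => cntH m a k ℓ) (m+1)]
    apply Finset.sum_congr rfl
    intro a ha
    rw [Finset.mem_range] at ha
    exact cntH_desc a m k ℓ (by omega)
  constructor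
  · rintro ⟨rfl, rfl⟩
    rw [hmain, Nat.add_sub_cancel]
    have hsub : ({m - 1, m} : Finset ℕ) ⊆ Finset.range (m+1) := by
      intro x hx
      rw [Finset.mem_insert, Finset.mem_singleton] at hx
      rw [Finset.mem_range]
      omega
    rw [← Finset.sum_subset hsub]
    · have hne : (m - 1 : ℕ) ∉ ({m} : Finset ℕ) := by
        rw [Finset.mem_singleton]
        omega
      rw [Finset.sum_insert hne, Finset.sum_singleton]
      have c1 : cntH (m - (m-1)) 0 0 0 = 1 := by
        rw [show m - (m - 1) = 1 by omega, cntH_base1, if_pos ⟨rfl, rfl⟩]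
      have c2 : cntH (m - m) 0 0 0 = 1 := by
        rw [Nat.sub_self, cntH_base0, if_pos ⟨rfl, rfl⟩]
      rw [c1, c2, mul_one, mul_one, Nat.descFactorial_self]
      rw [Nat.descFactorial_eq_factorial_mul_choose, Nat.choose_symm (by omega)]
      rw [Nat.choose_one_right, Nat.mul_comm (m-1).factorial m,
        Nat.mul_factorial_pred (by omega)]
      ring
    · intro x hx hnx
      rw [Finset.mem_range] at hx
      rw [Finset.mem_insert, Finset.mem_singleton] at hnx
      push_neg at hnx
      have h2 : 2 ≤ m - x := by omega
      rw [cntE_closed, stirling_zero_right, if_neg (by omega)]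
      simp
  · intro hne
    have ht : 1 ≤ k + ℓ := by
      rcases Nat.eq_zero_or_pos (k + ℓ) with h | h
      · exact absurd ⟨by omega, by omega⟩ hne
      · exact h
    rw [hmain, Nat.add_sub_cancel, ← Finset.sum_range_reflect]
    have e3 : ∀ j ∈ Finset.range (m+1),
        m.descFactorial (m + 1 - 1 - j) * cntH (m - (m + 1 - 1 - j)) 0 k ℓ =
        (k + ℓ).choose k * (m.choose j * (m - j).factorial * stirlingFirst (j-1) (k+ℓ)) := by
      intro j hj
      rw [Finset.mem_range] at hj
      rw [show m + 1 - 1 - j = m - j by omega, show m - (m - j) = j by omega,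
        cntE_closed, Nat.descFactorial_eq_factorial_mul_choose, Nat.choose_symm (by omega)]
      ring
    rw [Finset.sum_congr rfl e3, ← Finset.mul_sum]
    congr 1
    have hsub : Finset.Icc 2 m ⊆ Finset.range (m+1) := by
      intro x hx
      rw [Finset.mem_Icc] at hx
      rw [Finset.mem_range]
      omega
    refine (Finset.sum_subset hsub ?_).symm
    intro x hx hnx
    rw [Finset.mem_range] at hx
    rw [Finset.mem_Icc] at hnx
    push_neg at hnx
    have hx1 : x ≤ 1 := by
      by_cases h2 : 2 ≤ x
      · exact absurd (hnx h2) (by omega)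
      · omega
    obtain ⟨t, htt⟩ : ∃ t, k + ℓ = t + 1 := ⟨k + ℓ - 1, by omega⟩
    rw [htt, show x - 1 = 0 by omega]
    show m.choose x * (m - x).factorial * 0 = 0
    ring
end

section
/- Let S = {(0,0),(0,1),(0,2),(0,3),(1,1),(1,3),(2,1),(2,2),(2,3),(3,3)}. The mesh patterns q1 = (123, S) and q2 = (132, S) are jointly equidistributed. -/
namespace Stmt8

def S8 : Set (ℕ × ℕ) :=
  {(0, 0), (0, 1), (0, 2), (0, 3), (1, 1), (1, 3), (2, 1), (2, 2), (2, 3), (3, 3)}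

variable {n : ℕ}

/-- Witness predicate for an occurrence of `(123, S8)`. -/
def W1 (π : Equiv.Perm (Fin n)) (i e : Fin n) : Prop :=
  0 < (i : ℕ) ∧ (i : ℕ) < (e : ℕ) ∧ (∀ j : Fin n, (π j : ℕ) ≤ (π e : ℕ)) ∧
  ((π ⟨0, i.pos⟩ : ℕ) < (π i : ℕ)) ∧
  (∀ j : Fin n, (i : ℕ) < (j : ℕ) → (j : ℕ) < (e : ℕ) → (π j : ℕ) < (π ⟨0, i.pos⟩ : ℕ)) ∧
  (∀ j : Fin n, 0 < (j : ℕ) → (j : ℕ) < (i : ℕ) →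
    ¬((π ⟨0, i.pos⟩ : ℕ) < (π j : ℕ) ∧ (π j : ℕ) < (π i : ℕ)))

/-- Witness predicate for an occurrence of `(132, S8)`. -/
def W2 (π : Equiv.Perm (Fin n)) (e i : Fin n) : Prop :=
  0 < (e : ℕ) ∧ (e : ℕ) < (i : ℕ) ∧ (∀ j : Fin n, (π j : ℕ) ≤ (π e : ℕ)) ∧
  ((π ⟨0, e.pos⟩ : ℕ) < (π i : ℕ)) ∧
  (∀ j : Fin n, (e : ℕ) < (j : ℕ) → (j : ℕ) < (i : ℕ) → (π j : ℕ) < (π ⟨0, e.pos⟩ : ℕ)) ∧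
  (∀ j : Fin n, 0 < (j : ℕ) → (j : ℕ) < (e : ℕ) →
    ¬((π ⟨0, e.pos⟩ : ℕ) < (π j : ℕ) ∧ (π j : ℕ) < (π i : ℕ)))

lemma fin_val_inj {x y : Fin n} (h : (x : ℕ) = (y : ℕ)) : x = y := Fin.ext h

lemma pinj (π : Equiv.Perm (Fin n)) {x y : Fin n} (h : (π x : ℕ) = (π y : ℕ)) : x = y :=
  π.injective (Fin.ext h)

lemma mem_S8_iff (a b : ℕ) : (a, b) ∈ S8 ↔
    (a = 0 ∧ b = 0) ∨ (a = 0 ∧ b = 1) ∨ (a = 0 ∧ b = 2) ∨ (a = 0 ∧ b = 3) ∨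
    (a = 1 ∧ b = 1) ∨ (a = 1 ∧ b = 3) ∨ (a = 2 ∧ b = 1) ∨ (a = 2 ∧ b = 2) ∨
    (a = 2 ∧ b = 3) ∨ (a = 3 ∧ b = 3) := by
  simp [S8, Set.mem_insert_iff, Prod.ext_iff]

lemma strictMono_vec3 {α : Type*} [Preorder α] {x y z : α} (h1 : x < y) (h2 : y < z) :
    StrictMono ![x, y, z] := by
  intro a b hab
  fin_cases a <;> fin_cases b <;> simp_all <;> exact h1.trans h2

/-! ### The pattern 123 -/

theorem isMeshOcc123_fwd (π : Equiv.Perm (Fin n)) (i : Fin 3 → Fin n)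
    (h : IsMeshOcc perm123 S8 π i) : (i 0 : ℕ) = 0 ∧ W1 π (i 1) (i 2) := by
  obtain ⟨hsm, hpat, H⟩ := h
  have hi01 : (i 0 : ℕ) < (i 1 : ℕ) := hsm (show (0:Fin 3) < 1 by decide)
  have hi12 : (i 1 : ℕ) < (i 2 : ℕ) := hsm (show (1:Fin 3) < 2 by decide)
  have hv01 : (π (i 0) : ℕ) < (π (i 1) : ℕ) := (hpat 0 1).mpr (by decide)
  have hv12 : (π (i 1) : ℕ) < (π (i 2) : ℕ) := (hpat 1 2).mpr (by decide)
  have c00 : ∀ j : Fin n, 0 < (j:ℕ)+1 → (j:ℕ)+1 < (i 0:ℕ)+1 → 0 < (π j:ℕ)+1 → (π j:ℕ)+1 < (π (i 0):ℕ)+1 → False :=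
    fun j h1 h2 h3 h4 => H 0 0 (by simp [S8]) ⟨j, h1, h2, h3, h4⟩
  have c01 : ∀ j : Fin n, 0 < (j:ℕ)+1 → (j:ℕ)+1 < (i 0:ℕ)+1 → (π (i 0):ℕ)+1 < (π j:ℕ)+1 → (π j:ℕ)+1 < (π (i 1):ℕ)+1 → False :=
    fun j h1 h2 h3 h4 => H 0 1 (by simp [S8]) ⟨j, h1, h2, h3, h4⟩
  have c02 : ∀ j : Fin n, 0 < (j:ℕ)+1 → (j:ℕ)+1 < (i 0:ℕ)+1 → (π (i 1):ℕ)+1 < (π j:ℕ)+1 → (π j:ℕ)+1 < (π (i 2):ℕ)+1 → False :=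
    fun j h1 h2 h3 h4 => H 0 2 (by simp [S8]) ⟨j, h1, h2, h3, h4⟩
  have c03 : ∀ j : Fin n, 0 < (j:ℕ)+1 → (j:ℕ)+1 < (i 0:ℕ)+1 → (π (i 2):ℕ)+1 < (π j:ℕ)+1 → (π j:ℕ)+1 < n+1 → False :=
    fun j h1 h2 h3 h4 => H 0 3 (by simp [S8]) ⟨j, h1, h2, h3, h4⟩
  have c11 : ∀ j : Fin n, (i 0:ℕ)+1 < (j:ℕ)+1 → (j:ℕ)+1 < (i 1:ℕ)+1 → (π (i 0):ℕ)+1 < (π j:ℕ)+1 → (π j:ℕ)+1 < (π (i 1):ℕ)+1 → False :=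
    fun j h1 h2 h3 h4 => H 1 1 (by simp [S8]) ⟨j, h1, h2, h3, h4⟩
  have c13 : ∀ j : Fin n, (i 0:ℕ)+1 < (j:ℕ)+1 → (j:ℕ)+1 < (i 1:ℕ)+1 → (π (i 2):ℕ)+1 < (π j:ℕ)+1 → (π j:ℕ)+1 < n+1 → False :=
    fun j h1 h2 h3 h4 => H 1 3 (by simp [S8]) ⟨j, h1, h2, h3, h4⟩
  have c21 : ∀ j : Fin n, (i 1:ℕ)+1 < (j:ℕ)+1 → (j:ℕ)+1 < (i 2:ℕ)+1 → (π (i 0):ℕ)+1 < (π j:ℕ)+1 → (π j:ℕ)+1 < (π (i 1):ℕ)+1 → False :=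
    fun j h1 h2 h3 h4 => H 2 1 (by simp [S8]) ⟨j, h1, h2, h3, h4⟩
  have c22 : ∀ j : Fin n, (i 1:ℕ)+1 < (j:ℕ)+1 → (j:ℕ)+1 < (i 2:ℕ)+1 → (π (i 1):ℕ)+1 < (π j:ℕ)+1 → (π j:ℕ)+1 < (π (i 2):ℕ)+1 → False :=
    fun j h1 h2 h3 h4 => H 2 2 (by simp [S8]) ⟨j, h1, h2, h3, h4⟩
  have c23 : ∀ j : Fin n, (i 1:ℕ)+1 < (j:ℕ)+1 → (j:ℕ)+1 < (i 2:ℕ)+1 → (π (i 2):ℕ)+1 < (π j:ℕ)+1 → (π j:ℕ)+1 < n+1 → False :=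
    fun j h1 h2 h3 h4 => H 2 3 (by simp [S8]) ⟨j, h1, h2, h3, h4⟩
  have c33 : ∀ j : Fin n, (i 2:ℕ)+1 < (j:ℕ)+1 → (j:ℕ)+1 < n+1 → (π (i 2):ℕ)+1 < (π j:ℕ)+1 → (π j:ℕ)+1 < n+1 → False :=
    fun j h1 h2 h3 h4 => H 3 3 (by simp [S8]) ⟨j, h1, h2, h3, h4⟩
  have hi0 : (i 0 : ℕ) = 0 := by
    by_contra h0
    have hn : 0 < n := (i 0).pos
    have hjv : ((⟨0, hn⟩ : Fin n) : ℕ) = 0 := rfl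
    set j : Fin n := ⟨0, hn⟩ with hjdef
    have e0 : (π j : ℕ) ≠ (π (i 0) : ℕ) := by
      intro h; have h2 := congrArg Fin.val (pinj π h); omega
    have e1 : (π j : ℕ) ≠ (π (i 1) : ℕ) := by
      intro h; have h2 := congrArg Fin.val (pinj π h); omega
    have e2 : (π j : ℕ) ≠ (π (i 2) : ℕ) := by
      intro h; have h2 := congrArg Fin.val (pinj π h); omega
    have hc : (π j:ℕ) < (π (i 0):ℕ) ∨ ((π (i 0):ℕ) < (π j:ℕ) ∧ (π j:ℕ) < (π (i 1):ℕ))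
        ∨ ((π (i 1):ℕ) < (π j:ℕ) ∧ (π j:ℕ) < (π (i 2):ℕ)) ∨ (π (i 2):ℕ) < (π j:ℕ) := by omega
    have hjlt : (π j : ℕ) < n := (π j).isLt
    rcases hc with h | h | h | h
    · exact c00 j (by omega) (by omega) (by omega) (by omega)
    · exact c01 j (by omega) (by omega) (by omega) (by omega)
    · exact c02 j (by omega) (by omega) (by omega) (by omega)
    · exact c03 j (by omega) (by omega) (by omega) (by omega)
  have hmax : ∀ j : Fin n, (π j : ℕ) ≤ (π (i 2) : ℕ) := by
    intro j
    by_contra h0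
    push_neg at h0
    have e0 : (j : ℕ) ≠ (i 0 : ℕ) := by
      intro h; rw [show j = i 0 from fin_val_inj h] at h0; omega
    have e1 : (j : ℕ) ≠ (i 1 : ℕ) := by
      intro h; rw [show j = i 1 from fin_val_inj h] at h0; omega
    have e2 : (j : ℕ) ≠ (i 2 : ℕ) := by
      intro h; rw [show j = i 2 from fin_val_inj h] at h0; omega
    have hjlt : (j : ℕ) < n := j.isLt
    have hvlt : (π j : ℕ) < n := (π j).isLt
    have hc : ((i 0:ℕ) < j ∧ (j:ℕ) < (i 1:ℕ)) ∨ ((i 1:ℕ) < j ∧ (j:ℕ) < (i 2:ℕ)) ∨ (i 2:ℕ) < j := by omega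
    rcases hc with h | h | h
    · exact c13 j (by omega) (by omega) (by omega) (by omega)
    · exact c23 j (by omega) (by omega) (by omega) (by omega)
    · exact c33 j (by omega) (by omega) (by omega) (by omega)
  have hmid : ∀ j : Fin n, (i 1:ℕ) < (j:ℕ) → (j:ℕ) < (i 2:ℕ) → (π j : ℕ) < (π (i 0) : ℕ) := by
    intro j hj1 hj2
    have e0 : (π j : ℕ) ≠ (π (i 0) : ℕ) := by
      intro h; have h2 := congrArg Fin.val (pinj π h); omega
    have e1 : (π j : ℕ) ≠ (π (i 1) : ℕ) := by
      intro h; have h2 := congrArg Fin.val (pinj π h); omega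
    have e2 : (π j : ℕ) ≠ (π (i 2) : ℕ) := by
      intro h; have h2 := congrArg Fin.val (pinj π h); omega
    have hle := hmax j
    have k21 : ¬((π (i 0):ℕ) < (π j:ℕ) ∧ (π j:ℕ) < (π (i 1):ℕ)) :=
      fun ⟨a, b⟩ => c21 j (by omega) (by omega) (by omega) (by omega)
    have k22 : ¬((π (i 1):ℕ) < (π j:ℕ) ∧ (π j:ℕ) < (π (i 2):ℕ)) :=
      fun ⟨a, b⟩ => c22 j (by omega) (by omega) (by omega) (by omega)
    omega
  have hz : i 0 = (⟨0, (i 1).pos⟩ : Fin n) := fin_val_inj hi0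
  refine ⟨hi0, by omega, hi12, hmax, by rw [← hz]; exact hv01, fun j hj1 hj2 => ?_,
    fun j hj1 hj2 => ?_⟩
  · rw [← hz]
    exact hmid j hj1 hj2
  · rw [← hz]
    rintro ⟨a, b⟩
    exact c11 j (by omega) (by omega) (by omega) (by omega)

theorem isMeshOcc123_bwd (π : Equiv.Perm (Fin n)) (i1 e : Fin n) (h : W1 π i1 e) :
    IsMeshOcc perm123 S8 π ![⟨0, i1.pos⟩, i1, e] := by
  obtain ⟨hpos, hie, hmax, hv0, hmid, hlast⟩ := h
  have hve : (π i1 : ℕ) < (π e : ℕ) := by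
    have h1 := hmax i1
    have h3 : (π i1 : ℕ) ≠ (π e : ℕ) := fun hh => by
      have := congrArg Fin.val (π.injective (Fin.ext hh)); omega
    omega
  have hv0e : (π ⟨0, i1.pos⟩ : ℕ) < (π e : ℕ) := by omega
  refine ⟨?_, ?_, ?_⟩
  · exact strictMono_vec3 (show (⟨0, i1.pos⟩ : Fin n) < i1 from hpos)
      (show i1 < e from hie)
  · have hJ : StrictMono ![π ⟨0, i1.pos⟩, π i1, π e] :=
      strictMono_vec3 (show π ⟨0, i1.pos⟩ < π i1 from hv0) (show π i1 < π e from hve)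
    have key : ∀ a : Fin 3, π (![(⟨0, i1.pos⟩ : Fin n), i1, e] a)
        = ![π ⟨0, i1.pos⟩, π i1, π e] (perm123 a) := by
      intro a; fin_cases a <;> rfl
    intro a b
    rw [key a, key b]
    exact hJ.lt_iff_lt.trans (by constructor <;> (intro hh; exact hh))
  · intro a b hab
    rw [mem_S8_iff] at hab
    rcases hab with ⟨rfl, rfl⟩ | ⟨rfl, rfl⟩ | ⟨rfl, rfl⟩ | ⟨rfl, rfl⟩ | ⟨rfl, rfl⟩ |
      ⟨rfl, rfl⟩ | ⟨rfl, rfl⟩ | ⟨rfl, rfl⟩ | ⟨rfl, rfl⟩ | ⟨rfl, rfl⟩ <;>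
      rintro ⟨j, h1, h2, h3, h4⟩
    · have g2 : (j:ℕ) + 1 < 0 + 1 := h2
      omega
    · have g2 : (j:ℕ) + 1 < 0 + 1 := h2
      omega
    · have g2 : (j:ℕ) + 1 < 0 + 1 := h2
      omega
    · have g2 : (j:ℕ) + 1 < 0 + 1 := h2
      omega
    · have g1 : (0:ℕ) + 1 < (j:ℕ) + 1 := h1
      have g2 : (j:ℕ) + 1 < (i1:ℕ) + 1 := h2
      have g3 : (π ⟨0, i1.pos⟩:ℕ) + 1 < (π j:ℕ) + 1 := h3
      have g4 : (π j:ℕ) + 1 < (π i1:ℕ) + 1 := h4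
      exact hlast j (by omega) (by omega) ⟨by omega, by omega⟩
    · have g3 : (π e:ℕ) + 1 < (π j:ℕ) + 1 := h3
      have := hmax j
      omega
    · have g1 : (i1:ℕ) + 1 < (j:ℕ) + 1 := h1
      have g2 : (j:ℕ) + 1 < (e:ℕ) + 1 := h2
      have g3 : (π ⟨0, i1.pos⟩:ℕ) + 1 < (π j:ℕ) + 1 := h3
      have := hmid j (by omega) (by omega)
      omega
    · have g1 : (i1:ℕ) + 1 < (j:ℕ) + 1 := h1
      have g2 : (j:ℕ) + 1 < (e:ℕ) + 1 := h2
      have g3 : (π i1:ℕ) + 1 < (π j:ℕ) + 1 := h3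
      have := hmid j (by omega) (by omega)
      omega
    · have g3 : (π e:ℕ) + 1 < (π j:ℕ) + 1 := h3
      have := hmax j
      omega
    · have g3 : (π e:ℕ) + 1 < (π j:ℕ) + 1 := h3
      have := hmax j
      omega

lemma W1_unique (π : Equiv.Perm (Fin n)) {i e i' e' : Fin n}
    (h : W1 π i e) (h' : W1 π i' e') : i = i' ∧ e = e' := by
  obtain ⟨hp, hie, hmax, hv0, hmid, hlast⟩ := h
  obtain ⟨hp', hie', hmax', hv0', hmid', hlast'⟩ := h'
  have he : e = e' := pinj π (le_antisymm (hmax' e) (hmax e'))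
  subst he
  have hz : (π ⟨0, i.pos⟩ : ℕ) = (π ⟨0, i'.pos⟩ : ℕ) := rfl
  have hii : i = i' := by
    rcases Nat.lt_trichotomy (i : ℕ) (i' : ℕ) with hlt | heq | hgt
    · have := hmid i' hlt hie'
      omega
    · exact fin_val_inj heq
    · have := hmid' i hgt hie
      omega
  exact ⟨hii, rfl⟩

open scoped Classical in
theorem occ123 (π : Equiv.Perm (Fin n)) :
    occ perm123 S8 π = if ∃ i e, W1 π i e then 1 else 0 := by
  split_ifs with h
  · obtain ⟨i1, e, hw⟩ := h
    rw [show occ perm123 S8 π = Nat.card {i : Fin 3 → Fin n // IsMeshOcc perm123 S8 π i} from rfl,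
      Nat.card_eq_one_iff_unique]
    constructor
    · constructor
      rintro ⟨x, hx⟩ ⟨y, hy⟩
      obtain ⟨hx0, hxW⟩ := isMeshOcc123_fwd π x hx
      obtain ⟨hy0, hyW⟩ := isMeshOcc123_fwd π y hy
      obtain ⟨h1, h2⟩ := W1_unique π hxW hyW
      have h0 : x 0 = y 0 := fin_val_inj (by rw [hx0, hy0])
      apply Subtype.ext
      funext a
      fin_cases a
      · exact h0
      · exact h1
      · exact h2
    · exact ⟨⟨![⟨0, i1.pos⟩, i1, e], isMeshOcc123_bwd π i1 e hw⟩⟩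
  · have hE : IsEmpty {i : Fin 3 → Fin n // IsMeshOcc perm123 S8 π i} :=
      ⟨fun ⟨x, hx⟩ => h ⟨x 1, x 2, (isMeshOcc123_fwd π x hx).2⟩⟩
    exact Nat.card_of_isEmpty

/-! ### The pattern 132 -/

theorem isMeshOcc132_fwd (π : Equiv.Perm (Fin n)) (i : Fin 3 → Fin n)
    (h : IsMeshOcc perm132 S8 π i) : (i 0 : ℕ) = 0 ∧ W2 π (i 1) (i 2) := by
  obtain ⟨hsm, hpat, H⟩ := h
  have hi01 : (i 0 : ℕ) < (i 1 : ℕ) := hsm (show (0:Fin 3) < 1 by decide)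
  have hi12 : (i 1 : ℕ) < (i 2 : ℕ) := hsm (show (1:Fin 3) < 2 by decide)
  have hv01 : (π (i 0) : ℕ) < (π (i 1) : ℕ) := (hpat 0 1).mpr (by decide)
  have hv02 : (π (i 0) : ℕ) < (π (i 2) : ℕ) := (hpat 0 2).mpr (by decide)
  have hv21 : (π (i 2) : ℕ) < (π (i 1) : ℕ) := (hpat 2 1).mpr (by decide)
  -- value order: π (i 0) < π (i 2) < π (i 1)
  have c00 : ∀ j : Fin n, 0 < (j:ℕ)+1 → (j:ℕ)+1 < (i 0:ℕ)+1 → 0 < (π j:ℕ)+1 → (π j:ℕ)+1 < (π (i 0):ℕ)+1 → False :=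
    fun j h1 h2 h3 h4 => H 0 0 (by simp [S8]) ⟨j, h1, h2, h3, h4⟩
  have c01 : ∀ j : Fin n, 0 < (j:ℕ)+1 → (j:ℕ)+1 < (i 0:ℕ)+1 → (π (i 0):ℕ)+1 < (π j:ℕ)+1 → (π j:ℕ)+1 < (π (i 2):ℕ)+1 → False :=
    fun j h1 h2 h3 h4 => H 0 1 (by simp [S8]) ⟨j, h1, h2, h3, h4⟩
  have c02 : ∀ j : Fin n, 0 < (j:ℕ)+1 → (j:ℕ)+1 < (i 0:ℕ)+1 → (π (i 2):ℕ)+1 < (π j:ℕ)+1 → (π j:ℕ)+1 < (π (i 1):ℕ)+1 → False :=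
    fun j h1 h2 h3 h4 => H 0 2 (by simp [S8]) ⟨j, h1, h2, h3, h4⟩
  have c03 : ∀ j : Fin n, 0 < (j:ℕ)+1 → (j:ℕ)+1 < (i 0:ℕ)+1 → (π (i 1):ℕ)+1 < (π j:ℕ)+1 → (π j:ℕ)+1 < n+1 → False :=
    fun j h1 h2 h3 h4 => H 0 3 (by simp [S8]) ⟨j, h1, h2, h3, h4⟩
  have c11 : ∀ j : Fin n, (i 0:ℕ)+1 < (j:ℕ)+1 → (j:ℕ)+1 < (i 1:ℕ)+1 → (π (i 0):ℕ)+1 < (π j:ℕ)+1 → (π j:ℕ)+1 < (π (i 2):ℕ)+1 → False :=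
    fun j h1 h2 h3 h4 => H 1 1 (by simp [S8]) ⟨j, h1, h2, h3, h4⟩
  have c13 : ∀ j : Fin n, (i 0:ℕ)+1 < (j:ℕ)+1 → (j:ℕ)+1 < (i 1:ℕ)+1 → (π (i 1):ℕ)+1 < (π j:ℕ)+1 → (π j:ℕ)+1 < n+1 → False :=
    fun j h1 h2 h3 h4 => H 1 3 (by simp [S8]) ⟨j, h1, h2, h3, h4⟩
  have c21 : ∀ j : Fin n, (i 1:ℕ)+1 < (j:ℕ)+1 → (j:ℕ)+1 < (i 2:ℕ)+1 → (π (i 0):ℕ)+1 < (π j:ℕ)+1 → (π j:ℕ)+1 < (π (i 2):ℕ)+1 → False :=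
    fun j h1 h2 h3 h4 => H 2 1 (by simp [S8]) ⟨j, h1, h2, h3, h4⟩
  have c22 : ∀ j : Fin n, (i 1:ℕ)+1 < (j:ℕ)+1 → (j:ℕ)+1 < (i 2:ℕ)+1 → (π (i 2):ℕ)+1 < (π j:ℕ)+1 → (π j:ℕ)+1 < (π (i 1):ℕ)+1 → False :=
    fun j h1 h2 h3 h4 => H 2 2 (by simp [S8]) ⟨j, h1, h2, h3, h4⟩
  have c23 : ∀ j : Fin n, (i 1:ℕ)+1 < (j:ℕ)+1 → (j:ℕ)+1 < (i 2:ℕ)+1 → (π (i 1):ℕ)+1 < (π j:ℕ)+1 → (π j:ℕ)+1 < n+1 → False :=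
    fun j h1 h2 h3 h4 => H 2 3 (by simp [S8]) ⟨j, h1, h2, h3, h4⟩
  have c33 : ∀ j : Fin n, (i 2:ℕ)+1 < (j:ℕ)+1 → (j:ℕ)+1 < n+1 → (π (i 1):ℕ)+1 < (π j:ℕ)+1 → (π j:ℕ)+1 < n+1 → False :=
    fun j h1 h2 h3 h4 => H 3 3 (by simp [S8]) ⟨j, h1, h2, h3, h4⟩
  have hi0 : (i 0 : ℕ) = 0 := by
    by_contra h0
    have hn : 0 < n := (i 0).pos
    have hjv : ((⟨0, hn⟩ : Fin n) : ℕ) = 0 := rfl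
    set j : Fin n := ⟨0, hn⟩ with hjdef
    have e0 : (π j : ℕ) ≠ (π (i 0) : ℕ) := by
      intro h; have h2 := congrArg Fin.val (pinj π h); omega
    have e1 : (π j : ℕ) ≠ (π (i 1) : ℕ) := by
      intro h; have h2 := congrArg Fin.val (pinj π h); omega
    have e2 : (π j : ℕ) ≠ (π (i 2) : ℕ) := by
      intro h; have h2 := congrArg Fin.val (pinj π h); omega
    have hc : (π j:ℕ) < (π (i 0):ℕ) ∨ ((π (i 0):ℕ) < (π j:ℕ) ∧ (π j:ℕ) < (π (i 2):ℕ))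
        ∨ ((π (i 2):ℕ) < (π j:ℕ) ∧ (π j:ℕ) < (π (i 1):ℕ)) ∨ (π (i 1):ℕ) < (π j:ℕ) := by omega
    have hjlt : (π j : ℕ) < n := (π j).isLt
    rcases hc with h | h | h | h
    · exact c00 j (by omega) (by omega) (by omega) (by omega)
    · exact c01 j (by omega) (by omega) (by omega) (by omega)
    · exact c02 j (by omega) (by omega) (by omega) (by omega)
    · exact c03 j (by omega) (by omega) (by omega) (by omega)
  have hmax : ∀ j : Fin n, (π j : ℕ) ≤ (π (i 1) : ℕ) := by
    intro j
    by_contra h0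
    push_neg at h0
    have e0 : (j : ℕ) ≠ (i 0 : ℕ) := by
      intro h; rw [show j = i 0 from fin_val_inj h] at h0; omega
    have e1 : (j : ℕ) ≠ (i 1 : ℕ) := by
      intro h; rw [show j = i 1 from fin_val_inj h] at h0; omega
    have e2 : (j : ℕ) ≠ (i 2 : ℕ) := by
      intro h; rw [show j = i 2 from fin_val_inj h] at h0; omega
    have hjlt : (j : ℕ) < n := j.isLt
    have hvlt : (π j : ℕ) < n := (π j).isLt
    have hc : ((i 0:ℕ) < j ∧ (j:ℕ) < (i 1:ℕ)) ∨ ((i 1:ℕ) < j ∧ (j:ℕ) < (i 2:ℕ)) ∨ (i 2:ℕ) < j := by omega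
    rcases hc with h | h | h
    · exact c13 j (by omega) (by omega) (by omega) (by omega)
    · exact c23 j (by omega) (by omega) (by omega) (by omega)
    · exact c33 j (by omega) (by omega) (by omega) (by omega)
  have hmid : ∀ j : Fin n, (i 1:ℕ) < (j:ℕ) → (j:ℕ) < (i 2:ℕ) → (π j : ℕ) < (π (i 0) : ℕ) := by
    intro j hj1 hj2
    have e0 : (π j : ℕ) ≠ (π (i 0) : ℕ) := by
      intro h; have h2 := congrArg Fin.val (pinj π h); omega
    have e1 : (π j : ℕ) ≠ (π (i 1) : ℕ) := by
      intro h; have h2 := congrArg Fin.val (pinj π h); omega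
    have e2 : (π j : ℕ) ≠ (π (i 2) : ℕ) := by
      intro h; have h2 := congrArg Fin.val (pinj π h); omega
    have hle := hmax j
    have k21 : ¬((π (i 0):ℕ) < (π j:ℕ) ∧ (π j:ℕ) < (π (i 2):ℕ)) :=
      fun ⟨a, b⟩ => c21 j (by omega) (by omega) (by omega) (by omega)
    have k22 : ¬((π (i 2):ℕ) < (π j:ℕ) ∧ (π j:ℕ) < (π (i 1):ℕ)) :=
      fun ⟨a, b⟩ => c22 j (by omega) (by omega) (by omega) (by omega)
    omega
  have hz : i 0 = (⟨0, (i 1).pos⟩ : Fin n) := fin_val_inj hi0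
  refine ⟨hi0, by omega, hi12, hmax, by rw [← hz]; exact hv02, fun j hj1 hj2 => ?_,
    fun j hj1 hj2 => ?_⟩
  · rw [← hz]
    exact hmid j hj1 hj2
  · rw [← hz]
    rintro ⟨a, b⟩
    exact c11 j (by omega) (by omega) (by omega) (by omega)

theorem isMeshOcc132_bwd (π : Equiv.Perm (Fin n)) (e i2 : Fin n) (h : W2 π e i2) :
    IsMeshOcc perm132 S8 π ![⟨0, e.pos⟩, e, i2] := by
  obtain ⟨hpos, hie, hmax, hv0, hmid, hlast⟩ := h
  have hve : (π i2 : ℕ) < (π e : ℕ) := by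
    have h1 := hmax i2
    have h3 : (π i2 : ℕ) ≠ (π e : ℕ) := fun hh => by
      have := congrArg Fin.val (π.injective (Fin.ext hh)); omega
    omega
  have hv0e : (π ⟨0, e.pos⟩ : ℕ) < (π e : ℕ) := by omega
  refine ⟨?_, ?_, ?_⟩
  · exact strictMono_vec3 (show (⟨0, e.pos⟩ : Fin n) < e from hpos)
      (show e < i2 from hie)
  · have hJ : StrictMono ![π ⟨0, e.pos⟩, π i2, π e] :=
      strictMono_vec3 (show π ⟨0, e.pos⟩ < π i2 from hv0) (show π i2 < π e from hve)
    have key : ∀ a : Fin 3, π (![(⟨0, e.pos⟩ : Fin n), e, i2] a)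
        = ![π ⟨0, e.pos⟩, π i2, π e] (perm132 a) := by
      intro a; fin_cases a <;> rfl
    intro a b
    rw [key a, key b]
    exact hJ.lt_iff_lt
  · intro a b hab
    rw [mem_S8_iff] at hab
    rcases hab with ⟨rfl, rfl⟩ | ⟨rfl, rfl⟩ | ⟨rfl, rfl⟩ | ⟨rfl, rfl⟩ | ⟨rfl, rfl⟩ |
      ⟨rfl, rfl⟩ | ⟨rfl, rfl⟩ | ⟨rfl, rfl⟩ | ⟨rfl, rfl⟩ | ⟨rfl, rfl⟩ <;>
      rintro ⟨j, h1, h2, h3, h4⟩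
    · have g2 : (j:ℕ) + 1 < 0 + 1 := h2
      omega
    · have g2 : (j:ℕ) + 1 < 0 + 1 := h2
      omega
    · have g2 : (j:ℕ) + 1 < 0 + 1 := h2
      omega
    · have g2 : (j:ℕ) + 1 < 0 + 1 := h2
      omega
    · -- (1,1) : j ∈ (0, e), value in (π z, π i2)
      have g1 : (0:ℕ) + 1 < (j:ℕ) + 1 := h1
      have g2 : (j:ℕ) + 1 < (e:ℕ) + 1 := h2
      have g3 : (π ⟨0, e.pos⟩:ℕ) + 1 < (π j:ℕ) + 1 := h3
      have g4 : (π j:ℕ) + 1 < (π i2:ℕ) + 1 := h4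
      exact hlast j (by omega) (by omega) ⟨by omega, by omega⟩
    · -- (1,3) : value above π e
      have g3 : (π e:ℕ) + 1 < (π j:ℕ) + 1 := h3
      have := hmax j
      omega
    · -- (2,1) : j ∈ (e, i2), value in (π z, π i2)
      have g1 : (e:ℕ) + 1 < (j:ℕ) + 1 := h1
      have g2 : (j:ℕ) + 1 < (i2:ℕ) + 1 := h2
      have g3 : (π ⟨0, e.pos⟩:ℕ) + 1 < (π j:ℕ) + 1 := h3
      have := hmid j (by omega) (by omega)
      omega
    · -- (2,2) : j ∈ (e, i2), value in (π i2, π e)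
      have g1 : (e:ℕ) + 1 < (j:ℕ) + 1 := h1
      have g2 : (j:ℕ) + 1 < (i2:ℕ) + 1 := h2
      have g3 : (π i2:ℕ) + 1 < (π j:ℕ) + 1 := h3
      have := hmid j (by omega) (by omega)
      have := hv0
      omega
    · -- (2,3)
      have g3 : (π e:ℕ) + 1 < (π j:ℕ) + 1 := h3
      have := hmax j
      omega
    · -- (3,3)
      have g3 : (π e:ℕ) + 1 < (π j:ℕ) + 1 := h3
      have := hmax j
      omega

lemma W2_unique (π : Equiv.Perm (Fin n)) {e i e' i' : Fin n}
    (h : W2 π e i) (h' : W2 π e' i') : e = e' ∧ i = i' := by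
  obtain ⟨hp, hie, hmax, hv0, hmid, hlast⟩ := h
  obtain ⟨hp', hie', hmax', hv0', hmid', hlast'⟩ := h'
  have he : e = e' := pinj π (le_antisymm (hmax' e) (hmax e'))
  subst he
  have hz : (π ⟨0, e.pos⟩ : ℕ) = (π ⟨0, e.pos⟩ : ℕ) := rfl
  have hii : i = i' := by
    rcases Nat.lt_trichotomy (i : ℕ) (i' : ℕ) with hlt | heq | hgt
    · have := hmid' i hie hlt
      omega
    · exact fin_val_inj heq
    · have := hmid i' hie' hgt
      omega
  exact ⟨rfl, hii⟩

open scoped Classical in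
theorem occ132 (π : Equiv.Perm (Fin n)) :
    occ perm132 S8 π = if ∃ e i, W2 π e i then 1 else 0 := by
  split_ifs with h
  · obtain ⟨e, i2, hw⟩ := h
    rw [show occ perm132 S8 π = Nat.card {i : Fin 3 → Fin n // IsMeshOcc perm132 S8 π i} from rfl,
      Nat.card_eq_one_iff_unique]
    constructor
    · constructor
      rintro ⟨x, hx⟩ ⟨y, hy⟩
      obtain ⟨hx0, hxW⟩ := isMeshOcc132_fwd π x hx
      obtain ⟨hy0, hyW⟩ := isMeshOcc132_fwd π y hy
      obtain ⟨h1, h2⟩ := W2_unique π hxW hyW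
      have h0 : x 0 = y 0 := fin_val_inj (by rw [hx0, hy0])
      apply Subtype.ext
      funext a
      fin_cases a
      · exact h0
      · exact h1
      · exact h2
    · exact ⟨⟨![⟨0, e.pos⟩, e, i2], isMeshOcc132_bwd π e i2 hw⟩⟩
  · have hE : IsEmpty {i : Fin 3 → Fin n // IsMeshOcc perm132 S8 π i} :=
      ⟨fun ⟨x, hx⟩ => h ⟨x 1, x 2, (isMeshOcc132_fwd π x hx).2⟩⟩
    exact Nat.card_of_isEmpty

/-! ### The bijection between the two witness classes -/

lemma K1 {π : Equiv.Perm (Fin n)} {i e : Fin n} (h : W1 π i e) :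
    W2 (π * Equiv.swap i e) i e := by
  obtain ⟨hp, hie, hmax, hv0, hmid, hlast⟩ := h
  have hne : i ≠ e := fun hh => by rw [hh] at hie; omega
  have hq : ∀ j : Fin n, (π * Equiv.swap i e) j = π (Equiv.swap i e j) := fun j => rfl
  have hqi : (π * Equiv.swap i e) i = π e := by
    rw [hq, Equiv.swap_apply_left]
  have hqe : (π * Equiv.swap i e) e = π i := by
    rw [hq, Equiv.swap_apply_right]
  have hq0 : (π * Equiv.swap i e) ⟨0, i.pos⟩ = π ⟨0, i.pos⟩ := by
    rw [hq, Equiv.swap_apply_of_ne_of_ne]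
    · intro hh; rw [← hh] at hp; simp at hp
    · intro hh
      have := congrArg Fin.val hh
      simp at this
      omega
  refine ⟨hp, hie, ?_, ?_, ?_, ?_⟩
  · intro j
    rw [hq j, hqi]
    exact hmax _
  · rw [hq0, hqe]
    exact hv0
  · intro j hj1 hj2
    have hji : j ≠ i := fun hh => by rw [hh] at hj1; omega
    have hje : j ≠ e := fun hh => by rw [hh] at hj2; omega
    rw [hq j, Equiv.swap_apply_of_ne_of_ne hji hje, hq0]
    exact hmid j hj1 hj2
  · intro j hj1 hj2
    have hji : j ≠ i := fun hh => by rw [hh] at hj2; omega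
    have hje : j ≠ e := fun hh => by
      have := congrArg Fin.val hh
      omega
    rw [hq j, Equiv.swap_apply_of_ne_of_ne hji hje, hq0, hqe]
    exact hlast j hj1 hj2

lemma K2 {π : Equiv.Perm (Fin n)} {e i : Fin n} (h : W2 π e i) :
    W1 (π * Equiv.swap e i) e i := by
  obtain ⟨hp, hie, hmax, hv0, hmid, hlast⟩ := h
  have hne : e ≠ i := fun hh => by rw [hh] at hie; omega
  have hq : ∀ j : Fin n, (π * Equiv.swap e i) j = π (Equiv.swap e i j) := fun j => rfl
  have hqe : (π * Equiv.swap e i) e = π i := by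
    rw [hq, Equiv.swap_apply_left]
  have hqi : (π * Equiv.swap e i) i = π e := by
    rw [hq, Equiv.swap_apply_right]
  have hq0 : (π * Equiv.swap e i) ⟨0, e.pos⟩ = π ⟨0, e.pos⟩ := by
    rw [hq, Equiv.swap_apply_of_ne_of_ne]
    · intro hh; rw [← hh] at hp; simp at hp
    · intro hh
      have := congrArg Fin.val hh
      simp at this
      omega
  refine ⟨hp, hie, ?_, ?_, ?_, ?_⟩
  · intro j
    rw [hq j, hqi]
    exact hmax _
  · rw [hq0, hqe]
    exact hv0
  · intro j hj1 hj2
    have hji : j ≠ e := fun hh => by rw [hh] at hj1; omega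
    have hje : j ≠ i := fun hh => by rw [hh] at hj2; omega
    rw [hq j, Equiv.swap_apply_of_ne_of_ne hji hje, hq0]
    exact hmid j hj1 hj2
  · intro j hj1 hj2
    have hji : j ≠ e := fun hh => by rw [hh] at hj2; omega
    have hje : j ≠ i := fun hh => by
      have := congrArg Fin.val hh
      omega
    rw [hq j, Equiv.swap_apply_of_ne_of_ne hji hje, hq0, hqe]
    exact hlast j hj1 hj2

lemma key1 (q : Equiv.Perm (Fin n)) (h2 : ∃ i e, W1 q i e) (i e : Fin n)
    (hW : W1 q i e) :
    q * Equiv.swap h2.choose h2.choose_spec.choose = q * Equiv.swap i e := by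
  obtain ⟨a, b⟩ := W1_unique q hW h2.choose_spec.choose_spec
  subst a
  subst b
  rfl

lemma key2 (q : Equiv.Perm (Fin n)) (h2 : ∃ e i, W2 q e i) (e i : Fin n)
    (hW : W2 q e i) :
    q * Equiv.swap h2.choose h2.choose_spec.choose = q * Equiv.swap e i := by
  obtain ⟨a, b⟩ := W2_unique q hW h2.choose_spec.choose_spec
  subst a
  subst b
  rfl

noncomputable def classEquiv (n : ℕ) :
    {π : Equiv.Perm (Fin n) // ∃ i e, W1 π i e} ≃ {π : Equiv.Perm (Fin n) // ∃ e i, W2 π e i} where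
  toFun := fun x =>
    ⟨x.1 * Equiv.swap x.2.choose x.2.choose_spec.choose,
     ⟨x.2.choose, x.2.choose_spec.choose, K1 x.2.choose_spec.choose_spec⟩⟩
  invFun := fun y =>
    ⟨y.1 * Equiv.swap y.2.choose y.2.choose_spec.choose,
     ⟨y.2.choose, y.2.choose_spec.choose, K2 y.2.choose_spec.choose_spec⟩⟩
  left_inv := by
    rintro ⟨π, h⟩
    have hW : W1 π h.choose h.choose_spec.choose := h.choose_spec.choose_spec
    have step := key2 (π * Equiv.swap h.choose h.choose_spec.choose)
      ⟨h.choose, h.choose_spec.choose, K1 hW⟩ h.choose h.choose_spec.choose (K1 hW)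
    exact Subtype.ext (step.trans (by rw [mul_assoc, Equiv.swap_mul_self, mul_one]))
  right_inv := by
    rintro ⟨π, h⟩
    have hW : W2 π h.choose h.choose_spec.choose := h.choose_spec.choose_spec
    have step := key1 (π * Equiv.swap h.choose h.choose_spec.choose)
      ⟨h.choose, h.choose_spec.choose, K2 hW⟩ h.choose h.choose_spec.choose (K2 hW)
    exact Subtype.ext (step.trans (by rw [mul_assoc, Equiv.swap_mul_self, mul_one]))

theorem card_W1_eq_card_W2 (n : ℕ) :
    Nat.card {π : Equiv.Perm (Fin n) // ∃ i e, W1 π i e} =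
    Nat.card {π : Equiv.Perm (Fin n) // ∃ e i, W2 π e i} :=
  Nat.card_congr (classEquiv n)

/-! ### Counting -/

open Finset in
theorem card_and_not_eq {α : Type*} [Fintype α] {P Q : α → Prop}
    (h : Nat.card {x // P x} = Nat.card {x // Q x}) :
    Nat.card {x // P x ∧ ¬ Q x} = Nat.card {x // ¬ P x ∧ Q x} := by
  classical
  simp only [Nat.card_eq_fintype_card, Fintype.card_subtype] at *
  have e1 : filter (fun x => P x ∧ ¬ Q x) univ = filter P univ \ filter Q univ := by
    ext x; simp
  have e2 : filter (fun x => ¬ P x ∧ Q x) univ = filter Q univ \ filter P univ := by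
    ext x; simp [and_comm]
  have c1 := Finset.card_sdiff_add_card_inter (filter P univ) (filter Q univ)
  have c2 := Finset.card_sdiff_add_card_inter (filter Q univ) (filter P univ)
  rw [Finset.inter_comm] at c2
  have h' : (filter P univ).card = (filter Q univ).card := h
  rw [e1, e2]
  omega

end Stmt8

theorem statement_8 :
    JointlyEquidistributed perm123 ({(0, 0), (0, 1), (0, 2), (0, 3), (1, 1), (1, 3), (2, 1), (2, 2), (2, 3), (3, 3)} : Set (ℕ × ℕ))
      perm132 ({(0, 0), (0, 1), (0, 2), (0, 3), (1, 1), (1, 3), (2, 1), (2, 2), (2, 3), (3, 3)} : Set (ℕ × ℕ)) := by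
  classical
  intro n k ℓ
  show Nat.card {π : Equiv.Perm (Fin n) // occ perm123 Stmt8.S8 π = k ∧ occ perm132 Stmt8.S8 π = ℓ} =
    Nat.card {π : Equiv.Perm (Fin n) // occ perm123 Stmt8.S8 π = ℓ ∧ occ perm132 Stmt8.S8 π = k}
  have ho1 := Stmt8.occ123 (n := n)
  have ho2 := Stmt8.occ132 (n := n)
  rcases eq_or_ne k ℓ with rfl | hne
  · rfl
  have hle : ∀ (m : ℕ) (π : Equiv.Perm (Fin n)), occ perm123 Stmt8.S8 π = m → m ≤ 1 := by
    intro m π h; rw [ho1] at h; split_ifs at h <;> omega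
  have hle2 : ∀ (m : ℕ) (π : Equiv.Perm (Fin n)), occ perm132 Stmt8.S8 π = m → m ≤ 1 := by
    intro m π h; rw [ho2] at h; split_ifs at h <;> omega
  by_cases hk : k ≤ 1
  · by_cases hl : ℓ ≤ 1
    · have h10 : Nat.card {π : Equiv.Perm (Fin n) // occ perm123 Stmt8.S8 π = 1 ∧ occ perm132 Stmt8.S8 π = 0} =
          Nat.card {π : Equiv.Perm (Fin n) // occ perm123 Stmt8.S8 π = 0 ∧ occ perm132 Stmt8.S8 π = 1} := by
        have l1 : ∀ π : Equiv.Perm (Fin n),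
            (occ perm123 Stmt8.S8 π = 1 ∧ occ perm132 Stmt8.S8 π = 0) ↔
            ((∃ i e, Stmt8.W1 π i e) ∧ ¬ ∃ e i, Stmt8.W2 π e i) := by
          intro π; rw [ho1, ho2]; split_ifs <;> simp_all
        have l2 : ∀ π : Equiv.Perm (Fin n),
            (occ perm123 Stmt8.S8 π = 0 ∧ occ perm132 Stmt8.S8 π = 1) ↔
            (¬ (∃ i e, Stmt8.W1 π i e) ∧ ∃ e i, Stmt8.W2 π e i) := by
          intro π; rw [ho1, ho2]; split_ifs <;> simp_all
        rw [Nat.card_congr (Equiv.subtypeEquivRight l1), Nat.card_congr (Equiv.subtypeEquivRight l2)]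
        exact Stmt8.card_and_not_eq (Stmt8.card_W1_eq_card_W2 n)
      interval_cases k <;> interval_cases ℓ <;> first | omega | exact h10 | exact h10.symm
    · have i1 : IsEmpty {π : Equiv.Perm (Fin n) // occ perm123 Stmt8.S8 π = k ∧ occ perm132 Stmt8.S8 π = ℓ} :=
        ⟨fun x => hl (hle2 ℓ x.1 x.2.2)⟩
      have i2 : IsEmpty {π : Equiv.Perm (Fin n) // occ perm123 Stmt8.S8 π = ℓ ∧ occ perm132 Stmt8.S8 π = k} :=
        ⟨fun x => hl (hle ℓ x.1 x.2.1)⟩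
      rw [Nat.card_of_isEmpty, Nat.card_of_isEmpty]
  · have i1 : IsEmpty {π : Equiv.Perm (Fin n) // occ perm123 Stmt8.S8 π = k ∧ occ perm132 Stmt8.S8 π = ℓ} :=
      ⟨fun x => hk (hle k x.1 x.2.1)⟩
    have i2 : IsEmpty {π : Equiv.Perm (Fin n) // occ perm123 Stmt8.S8 π = ℓ ∧ occ perm132 Stmt8.S8 π = k} :=
      ⟨fun x => hk (hle2 k x.1 x.2.2)⟩
    rw [Nat.card_of_isEmpty, Nat.card_of_isEmpty]
end

section
/- Let S = {(0,0),(0,1),(0,2),(1,3),(2,1),(2,2),(2,3),(3,0),(3,3)}. The mesh patterns q1 = (123, S) and q2 = (132, S) are jointly equidistributed. -/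
namespace Aux10

def S0 : Set (ℕ × ℕ) :=
  {(0, 0), (0, 1), (0, 2), (1, 3), (2, 1), (2, 2), (2, 3), (3, 0), (3, 3)}

lemma mem_S0 {a b : ℕ} : (a, b) ∈ S0 ↔
    (a = 0 ∧ b = 0) ∨ (a = 0 ∧ b = 1) ∨ (a = 0 ∧ b = 2) ∨ (a = 1 ∧ b = 3) ∨
    (a = 2 ∧ b = 1) ∨ (a = 2 ∧ b = 2) ∨ (a = 2 ∧ b = 3) ∨ (a = 3 ∧ b = 0) ∨
    (a = 3 ∧ b = 3) := by
  simp [S0, Prod.ext_iff]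

variable {n : ℕ}

def Occ1 (π : Equiv.Perm (Fin n)) (i : Fin 3 → Fin n) : Prop :=
  (i 0 : ℕ) < i 1 ∧ (i 1 : ℕ) < i 2 ∧
  (π (i 0) : ℕ) < π (i 1) ∧ (π (i 1) : ℕ) < π (i 2) ∧
  (∀ j : Fin n, (j : ℕ) < i 0 → (π (i 2) : ℕ) < π j) ∧
  (∀ j : Fin n, (i 0 : ℕ) < j → (j : ℕ) < i 1 → (π j : ℕ) < π (i 2)) ∧
  (∀ j : Fin n, (i 1 : ℕ) < j → (j : ℕ) < i 2 → (π j : ℕ) < π (i 0)) ∧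
  (∀ j : Fin n, (i 2 : ℕ) < j → (π (i 0) : ℕ) < π j ∧ (π j : ℕ) < π (i 2))

def Occ2 (π : Equiv.Perm (Fin n)) (i : Fin 3 → Fin n) : Prop :=
  (i 0 : ℕ) < i 1 ∧ (i 1 : ℕ) < i 2 ∧
  (π (i 0) : ℕ) < π (i 2) ∧ (π (i 2) : ℕ) < π (i 1) ∧
  (∀ j : Fin n, (j : ℕ) < i 0 → (π (i 1) : ℕ) < π j) ∧
  (∀ j : Fin n, (i 0 : ℕ) < j → (j : ℕ) < i 1 → (π j : ℕ) < π (i 1)) ∧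
  (∀ j : Fin n, (i 1 : ℕ) < j → (j : ℕ) < i 2 → (π j : ℕ) < π (i 0)) ∧
  (∀ j : Fin n, (i 2 : ℕ) < j → (π (i 0) : ℕ) < π j ∧ (π j : ℕ) < π (i 1))

lemma pi_ne (π : Equiv.Perm (Fin n)) {j k : Fin n} (h : (j : ℕ) ≠ (k : ℕ)) :
    (π j : ℕ) ≠ (π k : ℕ) := by
  intro he
  exact h (congrArg Fin.val (π.injective (Fin.val_injective he)))

lemma strictMono_fin3 {f : Fin 3 → Fin n} (h01 : (f 0 : ℕ) < f 1) (h12 : (f 1 : ℕ) < f 2) :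
    StrictMono f := by
  intro a b hab
  match a, b, hab with
  | ⟨0, _⟩, ⟨1, _⟩, _ => exact Fin.lt_def.mpr h01
  | ⟨0, _⟩, ⟨2, _⟩, _ => exact Fin.lt_def.mpr (h01.trans h12)
  | ⟨1, _⟩, ⟨2, _⟩, _ => exact Fin.lt_def.mpr h12
  | ⟨0, _⟩, ⟨0, _⟩, h => exact absurd (Fin.mk_lt_mk.mp h) (by omega)
  | ⟨1, _⟩, ⟨0, _⟩, h => exact absurd (Fin.mk_lt_mk.mp h) (by omega)
  | ⟨1, _⟩, ⟨1, _⟩, h => exact absurd (Fin.mk_lt_mk.mp h) (by omega)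
  | ⟨2, _⟩, ⟨0, _⟩, h => exact absurd (Fin.mk_lt_mk.mp h) (by omega)
  | ⟨2, _⟩, ⟨1, _⟩, h => exact absurd (Fin.mk_lt_mk.mp h) (by omega)
  | ⟨2, _⟩, ⟨2, _⟩, h => exact absurd (Fin.mk_lt_mk.mp h) (by omega)

section Char

variable (π : Equiv.Perm (Fin n)) (i : Fin 3 → Fin n)

lemma pE0 : posExt i 0 = 0 := rfl
lemma pE1 : posExt i 1 = (i 0 : ℕ) + 1 := rfl
lemma pE2 : posExt i 2 = (i 1 : ℕ) + 1 := rfl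
lemma pE3 : posExt i 3 = (i 2 : ℕ) + 1 := rfl
lemma pE4 : posExt i 4 = n + 1 := rfl
lemma pE1' : posExt i (0 + 1) = (i 0 : ℕ) + 1 := rfl
lemma pE2' : posExt i (1 + 1) = (i 1 : ℕ) + 1 := rfl
lemma pE3' : posExt i (2 + 1) = (i 2 : ℕ) + 1 := rfl
lemma pE4' : posExt i (3 + 1) = n + 1 := rfl
lemma vE10 : valExt perm123 π i 0 = 0 := rfl
lemma vE11 : valExt perm123 π i 1 = (π (i 0) : ℕ) + 1 := rfl
lemma vE12 : valExt perm123 π i 2 = (π (i 1) : ℕ) + 1 := rfl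
lemma vE13 : valExt perm123 π i 3 = (π (i 2) : ℕ) + 1 := rfl
lemma vE14 : valExt perm123 π i 4 = n + 1 := rfl
lemma vE11' : valExt perm123 π i (0 + 1) = (π (i 0) : ℕ) + 1 := rfl
lemma vE12' : valExt perm123 π i (1 + 1) = (π (i 1) : ℕ) + 1 := rfl
lemma vE13' : valExt perm123 π i (2 + 1) = (π (i 2) : ℕ) + 1 := rfl
lemma vE14' : valExt perm123 π i (3 + 1) = n + 1 := rfl
lemma vE20 : valExt perm132 π i 0 = 0 := rfl
lemma vE21 : valExt perm132 π i 1 = (π (i 0) : ℕ) + 1 := rfl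
lemma vE22 : valExt perm132 π i 2 = (π (i 2) : ℕ) + 1 := rfl
lemma vE23 : valExt perm132 π i 3 = (π (i 1) : ℕ) + 1 := rfl
lemma vE24 : valExt perm132 π i 4 = n + 1 := rfl
lemma vE21' : valExt perm132 π i (0 + 1) = (π (i 0) : ℕ) + 1 := rfl
lemma vE22' : valExt perm132 π i (1 + 1) = (π (i 2) : ℕ) + 1 := rfl
lemma vE23' : valExt perm132 π i (2 + 1) = (π (i 1) : ℕ) + 1 := rfl
lemma vE24' : valExt perm132 π i (3 + 1) = n + 1 := rfl

lemma isMeshOcc1_iff : IsMeshOcc perm123 S0 π i ↔ Occ1 π i := by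
  constructor
  · rintro ⟨hm, hiso, hmesh⟩
    have h01 : (i 0 : ℕ) < i 1 := hm (by decide : (0 : Fin 3) < 1)
    have h12 : (i 1 : ℕ) < i 2 := hm (by decide : (1 : Fin 3) < 2)
    have hv01 : (π (i 0) : ℕ) < π (i 1) := (hiso 0 1).2 (by decide)
    have hv12 : (π (i 1) : ℕ) < π (i 2) := (hiso 1 2).2 (by decide)
    have A00 := hmesh 0 0 (by rw [mem_S0]; omega)
    have A01 := hmesh 0 1 (by rw [mem_S0]; omega)
    have A02 := hmesh 0 2 (by rw [mem_S0]; omega)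
    have A13 := hmesh 1 3 (by rw [mem_S0]; omega)
    have A21 := hmesh 2 1 (by rw [mem_S0]; omega)
    have A22 := hmesh 2 2 (by rw [mem_S0]; omega)
    have A23 := hmesh 2 3 (by rw [mem_S0]; omega)
    have A30 := hmesh 3 0 (by rw [mem_S0]; omega)
    have A33 := hmesh 3 3 (by rw [mem_S0]; omega)
    simp only [pE0, pE1, pE2, pE3, pE4, pE1', pE2', pE3', pE4', vE10, vE11, vE12, vE13, vE14, vE11', vE12', vE13', vE14'] at A00 A01 A02 A13 A21 A22 A23 A30 A33
    refine ⟨h01, h12, hv01, hv12, ?_, ?_, ?_, ?_⟩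
    · intro j hj
      have hne0 := pi_ne π (show (j : ℕ) ≠ i 0 by omega)
      have hne1 := pi_ne π (show (j : ℕ) ≠ i 1 by omega)
      have hne2 := pi_ne π (show (j : ℕ) ≠ i 2 by omega)
      by_contra hc
      push_neg at hc
      have hsplit : (π j : ℕ) < π (i 0) ∨
          ((π (i 0) : ℕ) < π j ∧ (π j : ℕ) < π (i 1)) ∨
          ((π (i 1) : ℕ) < π j ∧ (π j : ℕ) < π (i 2)) := by omega
      rcases hsplit with h | h | h
      · exact A00 ⟨j, by omega⟩
      · exact A01 ⟨j, by omega⟩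
      · exact A02 ⟨j, by omega⟩
    · intro j hj1 hj2
      have hne2 := pi_ne π (show (j : ℕ) ≠ i 2 by omega)
      have hlt : (π j : ℕ) < n := (π j).isLt
      by_contra hc
      push_neg at hc
      exact A13 ⟨j, by omega⟩
    · intro j hj1 hj2
      have hne0 := pi_ne π (show (j : ℕ) ≠ i 0 by omega)
      have hne1 := pi_ne π (show (j : ℕ) ≠ i 1 by omega)
      have hne2 := pi_ne π (show (j : ℕ) ≠ i 2 by omega)
      have hlt : (π j : ℕ) < n := (π j).isLt
      by_contra hc
      push_neg at hc
      have hsplit : ((π (i 0) : ℕ) < π j ∧ (π j : ℕ) < π (i 1)) ∨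
          ((π (i 1) : ℕ) < π j ∧ (π j : ℕ) < π (i 2)) ∨
          (π (i 2) : ℕ) < π j := by omega
      rcases hsplit with h | h | h
      · exact A21 ⟨j, by omega⟩
      · exact A22 ⟨j, by omega⟩
      · exact A23 ⟨j, by omega⟩
    · intro j hj
      have hne0 := pi_ne π (show (j : ℕ) ≠ i 0 by omega)
      have hne2 := pi_ne π (show (j : ℕ) ≠ i 2 by omega)
      have hlt : (π j : ℕ) < n := (π j).isLt
      constructor
      · by_contra hc
        push_neg at hc
        exact A30 ⟨j, by omega⟩
      · by_contra hc
        push_neg at hc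
        exact A33 ⟨j, by omega⟩
  · rintro ⟨h01, h12, hv01, hv12, hL, hM1, hM2, hR⟩
    refine ⟨strictMono_fin3 h01 h12, ?_, ?_⟩
    · intro a b
      exact (strictMono_fin3 (f := fun c => π (i c)) hv01 hv12).lt_iff_lt
    · intro a b hab
      rw [mem_S0] at hab
      rcases hab with ⟨rfl, rfl⟩ | ⟨rfl, rfl⟩ | ⟨rfl, rfl⟩ | ⟨rfl, rfl⟩ | ⟨rfl, rfl⟩ |
        ⟨rfl, rfl⟩ | ⟨rfl, rfl⟩ | ⟨rfl, rfl⟩ | ⟨rfl, rfl⟩ <;>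
        rintro ⟨j, hj1, hj2, hj3, hj4⟩ <;>
        simp only [pE0, pE1, pE2, pE3, pE4, pE1', pE2', pE3', pE4', vE10, vE11, vE12, vE13, vE14, vE11', vE12', vE13', vE14'] at hj1 hj2 hj3 hj4
      · exact absurd hj4 (by have := hL j (by omega); omega)
      · exact absurd hj4 (by have := hL j (by omega); omega)
      · exact absurd hj4 (by have := hL j (by omega); omega)
      · exact absurd hj3 (by have := hM1 j (by omega) (by omega); omega)
      · exact absurd hj4 (by have := hM2 j (by omega) (by omega); omega)
      · exact absurd hj4 (by have := hM2 j (by omega) (by omega); omega)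
      · exact absurd hj3 (by have := hM2 j (by omega) (by omega); omega)
      · exact absurd hj4 (by have := (hR j (by omega)).1; omega)
      · exact absurd hj3 (by have := (hR j (by omega)).2; omega)

lemma isMeshOcc2_iff : IsMeshOcc perm132 S0 π i ↔ Occ2 π i := by
  constructor
  · rintro ⟨hm, hiso, hmesh⟩
    have h01 : (i 0 : ℕ) < i 1 := hm (by decide : (0 : Fin 3) < 1)
    have h12 : (i 1 : ℕ) < i 2 := hm (by decide : (1 : Fin 3) < 2)
    have hv02 : (π (i 0) : ℕ) < π (i 2) := (hiso 0 2).2 (by decide)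
    have hv21 : (π (i 2) : ℕ) < π (i 1) := (hiso 2 1).2 (by decide)
    have A00 := hmesh 0 0 (by rw [mem_S0]; omega)
    have A01 := hmesh 0 1 (by rw [mem_S0]; omega)
    have A02 := hmesh 0 2 (by rw [mem_S0]; omega)
    have A13 := hmesh 1 3 (by rw [mem_S0]; omega)
    have A21 := hmesh 2 1 (by rw [mem_S0]; omega)
    have A22 := hmesh 2 2 (by rw [mem_S0]; omega)
    have A23 := hmesh 2 3 (by rw [mem_S0]; omega)
    have A30 := hmesh 3 0 (by rw [mem_S0]; omega)
    have A33 := hmesh 3 3 (by rw [mem_S0]; omega)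
    simp only [pE0, pE1, pE2, pE3, pE4, pE1', pE2', pE3', pE4', vE20, vE21, vE22, vE23, vE24,
      vE21', vE22', vE23', vE24'] at A00 A01 A02 A13 A21 A22 A23 A30 A33
    refine ⟨h01, h12, hv02, hv21, ?_, ?_, ?_, ?_⟩
    · intro j hj
      have hne0 := pi_ne π (show (j : ℕ) ≠ i 0 by omega)
      have hne1 := pi_ne π (show (j : ℕ) ≠ i 1 by omega)
      have hne2 := pi_ne π (show (j : ℕ) ≠ i 2 by omega)
      by_contra hc
      push_neg at hc
      have hsplit : (π j : ℕ) < π (i 0) ∨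
          ((π (i 0) : ℕ) < π j ∧ (π j : ℕ) < π (i 2)) ∨
          ((π (i 2) : ℕ) < π j ∧ (π j : ℕ) < π (i 1)) := by omega
      rcases hsplit with h | h | h
      · exact A00 ⟨j, by omega⟩
      · exact A01 ⟨j, by omega⟩
      · exact A02 ⟨j, by omega⟩
    · intro j hj1 hj2
      have hne1 := pi_ne π (show (j : ℕ) ≠ i 1 by omega)
      have hlt : (π j : ℕ) < n := (π j).isLt
      by_contra hc
      push_neg at hc
      exact A13 ⟨j, by omega⟩
    · intro j hj1 hj2
      have hne0 := pi_ne π (show (j : ℕ) ≠ i 0 by omega)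
      have hne1 := pi_ne π (show (j : ℕ) ≠ i 1 by omega)
      have hne2 := pi_ne π (show (j : ℕ) ≠ i 2 by omega)
      have hlt : (π j : ℕ) < n := (π j).isLt
      by_contra hc
      push_neg at hc
      have hsplit : ((π (i 0) : ℕ) < π j ∧ (π j : ℕ) < π (i 2)) ∨
          ((π (i 2) : ℕ) < π j ∧ (π j : ℕ) < π (i 1)) ∨
          (π (i 1) : ℕ) < π j := by omega
      rcases hsplit with h | h | h
      · exact A21 ⟨j, by omega⟩
      · exact A22 ⟨j, by omega⟩
      · exact A23 ⟨j, by omega⟩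
    · intro j hj
      have hne0 := pi_ne π (show (j : ℕ) ≠ i 0 by omega)
      have hne1 := pi_ne π (show (j : ℕ) ≠ i 1 by omega)
      have hlt : (π j : ℕ) < n := (π j).isLt
      constructor
      · by_contra hc
        push_neg at hc
        exact A30 ⟨j, by omega⟩
      · by_contra hc
        push_neg at hc
        exact A33 ⟨j, by omega⟩
  · rintro ⟨h01, h12, hv02, hv21, hL, hM1, hM2, hR⟩
    refine ⟨strictMono_fin3 h01 h12, ?_, ?_⟩
    · intro a b
      have h := (strictMono_fin3 (f := fun c => π (i (perm132.symm c))) hv02 hv21).lt_iff_lt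
        (a := perm132 a) (b := perm132 b)
      simp only [Equiv.symm_apply_apply] at h
      exact h
    · intro a b hab
      rw [mem_S0] at hab
      rcases hab with ⟨rfl, rfl⟩ | ⟨rfl, rfl⟩ | ⟨rfl, rfl⟩ | ⟨rfl, rfl⟩ | ⟨rfl, rfl⟩ |
        ⟨rfl, rfl⟩ | ⟨rfl, rfl⟩ | ⟨rfl, rfl⟩ | ⟨rfl, rfl⟩ <;>
        rintro ⟨j, hj1, hj2, hj3, hj4⟩ <;>
        simp only [pE0, pE1, pE2, pE3, pE4, pE1', pE2', pE3', pE4', vE20, vE21, vE22, vE23,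
          vE24, vE21', vE22', vE23', vE24'] at hj1 hj2 hj3 hj4
      · exact absurd hj4 (by have := hL j (by omega); omega)
      · exact absurd hj4 (by have := hL j (by omega); omega)
      · exact absurd hj4 (by have := hL j (by omega); omega)
      · exact absurd hj3 (by have := hM1 j (by omega) (by omega); omega)
      · exact absurd hj4 (by have := hM2 j (by omega) (by omega); omega)
      · exact absurd hj4 (by have := hM2 j (by omega) (by omega); omega)
      · exact absurd hj3 (by have := hM2 j (by omega) (by omega); omega)
      · exact absurd hj4 (by have := (hR j (by omega)).1; omega)
      · exact absurd hj3 (by have := (hR j (by omega)).2; omega)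

end Char

section Unique

variable {π : Equiv.Perm (Fin n)} {i i' : Fin 3 → Fin n}

lemma occ1_top (h : Occ1 π i) :
    ∀ j : Fin n, (π (i 2) : ℕ) < π j → (j : ℕ) < i 0 := by
  obtain ⟨h01, h12, hv01, hv12, hL, hM1, hM2, hR⟩ := h
  intro j hj
  by_contra hge
  push_neg at hge
  have hsp : (j : ℕ) = i 0 ∨ ((i 0 : ℕ) < j ∧ (j : ℕ) < i 1) ∨ (j : ℕ) = i 1 ∨
      ((i 1 : ℕ) < j ∧ (j : ℕ) < i 2) ∨ (j : ℕ) = i 2 ∨ (i 2 : ℕ) < j := by omega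
  rcases hsp with he | hb | he | hb | he | hb
  · rw [Fin.val_injective he] at hj; omega
  · have := hM1 j hb.1 hb.2; omega
  · rw [Fin.val_injective he] at hj; omega
  · have := hM2 j hb.1 hb.2; omega
  · rw [Fin.val_injective he] at hj; omega
  · have := (hR j hb).2; omega

lemma occ2_top (h : Occ2 π i) :
    ∀ j : Fin n, (π (i 1) : ℕ) < π j → (j : ℕ) < i 0 := by
  obtain ⟨h01, h12, hv02, hv21, hL, hM1, hM2, hR⟩ := h
  intro j hj
  by_contra hge
  push_neg at hge
  have hsp : (j : ℕ) = i 0 ∨ ((i 0 : ℕ) < j ∧ (j : ℕ) < i 1) ∨ (j : ℕ) = i 1 ∨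
      ((i 1 : ℕ) < j ∧ (j : ℕ) < i 2) ∨ (j : ℕ) = i 2 ∨ (i 2 : ℕ) < j := by omega
  rcases hsp with he | hb | he | hb | he | hb
  · rw [Fin.val_injective he] at hj; omega
  · have := hM1 j hb.1 hb.2; omega
  · rw [Fin.val_injective he] at hj; omega
  · have := hM2 j hb.1 hb.2; omega
  · rw [Fin.val_injective he] at hj; omega
  · have := (hR j hb).2; omega

lemma occ1_aux (h : Occ1 π i) (h' : Occ1 π i') : ¬ ((π (i 2) : ℕ) < π (i' 2)) := by
  intro hlt
  have h1 : (i' 2 : ℕ) < i 0 := occ1_top h _ hlt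
  obtain ⟨h01, h12, hv01, hv12, hL, hM1, hM2, hR⟩ := h
  obtain ⟨h01', h12', hv01', hv12', hL', hM1', hM2', hR'⟩ := h'
  have h2 : (π (i 2) : ℕ) < π (i' 0) := hL (i' 0) (by omega)
  have h3 := (hR' (i 2) (by omega)).1
  omega

lemma occ1_unique (h : Occ1 π i) (h' : Occ1 π i') : i = i' := by
  have e2v : (π (i 2) : ℕ) = π (i' 2) := by
    have t1 := occ1_aux h h'
    have t2 := occ1_aux h' h
    omega
  have e2 : i 2 = i' 2 := π.injective (Fin.val_injective e2v)
  obtain ⟨h01, h12, hv01, hv12, hL, hM1, hM2, hR⟩ := h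
  obtain ⟨h01', h12', hv01', hv12', hL', hM1', hM2', hR'⟩ := h'
  have e2n : (i 2 : ℕ) = i' 2 := congrArg Fin.val e2
  have e0 : i 0 = i' 0 := by
    rcases lt_trichotomy ((i 0 : ℕ)) ((i' 0 : ℕ)) with hlt | he | hlt
    · have := hL' (i 0) hlt; omega
    · exact Fin.val_injective he
    · have := hL (i' 0) hlt; omega
  have e0v : (π (i 0) : ℕ) = π (i' 0) := congrArg Fin.val (congrArg π e0)
  have e1 : i 1 = i' 1 := by
    rcases lt_trichotomy ((i 1 : ℕ)) ((i' 1 : ℕ)) with hlt | he | hlt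
    · have := hM2 (i' 1) hlt (by omega); omega
    · exact Fin.val_injective he
    · have := hM2' (i 1) hlt (by omega); omega
  funext j
  match j with
  | ⟨0, _⟩ => exact e0
  | ⟨1, _⟩ => exact e1
  | ⟨2, _⟩ => exact e2

lemma occ2_aux (h : Occ2 π i) (h' : Occ2 π i') : ¬ ((π (i 1) : ℕ) < π (i' 1)) := by
  intro hlt
  have h1 : (i' 1 : ℕ) < i 0 := occ2_top h _ hlt
  have h1b : (i' 0 : ℕ) < i 0 := by
    have := h'.1; omega
  have h2 : (π (i 1) : ℕ) < π (i' 0) := by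
    obtain ⟨h01, h12, hv02, hv21, hL, hM1, hM2, hR⟩ := h
    exact hL (i' 0) h1b
  have h3 : (i' 2 : ℕ) < i 0 := by
    apply occ2_top h
    have := h'.2.2.1
    omega
  obtain ⟨h01, h12, hv02, hv21, hL, hM1, hM2, hR⟩ := h
  obtain ⟨h01', h12', hv02', hv21', hL', hM1', hM2', hR'⟩ := h'
  have h4 := (hR' (i 2) (by omega)).1
  omega

lemma occ2_unique (h : Occ2 π i) (h' : Occ2 π i') : i = i' := by
  have e1v : (π (i 1) : ℕ) = π (i' 1) := by
    have t1 := occ2_aux h h'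
    have t2 := occ2_aux h' h
    omega
  have e1 : i 1 = i' 1 := π.injective (Fin.val_injective e1v)
  obtain ⟨h01, h12, hv02, hv21, hL, hM1, hM2, hR⟩ := h
  obtain ⟨h01', h12', hv02', hv21', hL', hM1', hM2', hR'⟩ := h'
  have e1n : (i 1 : ℕ) = i' 1 := congrArg Fin.val e1
  have e0 : i 0 = i' 0 := by
    rcases lt_trichotomy ((i 0 : ℕ)) ((i' 0 : ℕ)) with hlt | he | hlt
    · have := hL' (i 0) hlt; omega
    · exact Fin.val_injective he
    · have := hL (i' 0) hlt; omega
  have e0v : (π (i 0) : ℕ) = π (i' 0) := congrArg Fin.val (congrArg π e0)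
  have e2 : i 2 = i' 2 := by
    rcases lt_trichotomy ((i 2 : ℕ)) ((i' 2 : ℕ)) with hlt | he | hlt
    · have := hM2' (i 2) (by omega) hlt; omega
    · exact Fin.val_injective he
    · have := hM2 (i' 2) (by omega) hlt; omega
  funext j
  match j with
  | ⟨0, _⟩ => exact e0
  | ⟨1, _⟩ => exact e1
  | ⟨2, _⟩ => exact e2

end Unique

section Swap

variable {π : Equiv.Perm (Fin n)} {i : Fin 3 → Fin n}

lemma occ1_swap (h : Occ1 π i) : Occ2 (π * Equiv.swap (i 1) (i 2)) i := by
  obtain ⟨h01, h12, hv01, hv12, hL, hM1, hM2, hR⟩ := h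
  have key : ∀ j : Fin n, (j : ℕ) ≠ i 1 → (j : ℕ) ≠ i 2 →
      ((π * Equiv.swap (i 1) (i 2)) j : ℕ) = π j := by
    intro j hj1 hj2
    rw [Equiv.Perm.mul_apply,
      Equiv.swap_apply_of_ne_of_ne (Fin.ne_of_val_ne hj1) (Fin.ne_of_val_ne hj2)]
  have k0 : ((π * Equiv.swap (i 1) (i 2)) (i 0) : ℕ) = π (i 0) :=
    key _ (by omega) (by omega)
  have k1 : ((π * Equiv.swap (i 1) (i 2)) (i 1) : ℕ) = π (i 2) := by
    rw [Equiv.Perm.mul_apply, Equiv.swap_apply_left]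
  have k2 : ((π * Equiv.swap (i 1) (i 2)) (i 2) : ℕ) = π (i 1) := by
    rw [Equiv.Perm.mul_apply, Equiv.swap_apply_right]
  refine ⟨h01, h12, ?_, ?_, ?_, ?_, ?_, ?_⟩
  · rw [k0, k2]; exact hv01
  · rw [k2, k1]; exact hv12
  · intro j hj
    rw [k1, key j (by omega) (by omega)]
    exact hL j hj
  · intro j hj1 hj2
    rw [key j (by omega) (by omega), k1]
    exact hM1 j hj1 hj2
  · intro j hj1 hj2
    rw [key j (by omega) (by omega), k0]
    exact hM2 j hj1 hj2
  · intro j hj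
    rw [key j (by omega) (by omega), k0, k1]
    exact hR j hj

lemma occ2_swap (h : Occ2 π i) : Occ1 (π * Equiv.swap (i 1) (i 2)) i := by
  obtain ⟨h01, h12, hv02, hv21, hL, hM1, hM2, hR⟩ := h
  have key : ∀ j : Fin n, (j : ℕ) ≠ i 1 → (j : ℕ) ≠ i 2 →
      ((π * Equiv.swap (i 1) (i 2)) j : ℕ) = π j := by
    intro j hj1 hj2
    rw [Equiv.Perm.mul_apply,
      Equiv.swap_apply_of_ne_of_ne (Fin.ne_of_val_ne hj1) (Fin.ne_of_val_ne hj2)]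
  have k0 : ((π * Equiv.swap (i 1) (i 2)) (i 0) : ℕ) = π (i 0) :=
    key _ (by omega) (by omega)
  have k1 : ((π * Equiv.swap (i 1) (i 2)) (i 1) : ℕ) = π (i 2) := by
    rw [Equiv.Perm.mul_apply, Equiv.swap_apply_left]
  have k2 : ((π * Equiv.swap (i 1) (i 2)) (i 2) : ℕ) = π (i 1) := by
    rw [Equiv.Perm.mul_apply, Equiv.swap_apply_right]
  refine ⟨h01, h12, ?_, ?_, ?_, ?_, ?_, ?_⟩
  · rw [k0, k1]; exact hv02
  · rw [k1, k2]; exact hv21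
  · intro j hj
    rw [k2, key j (by omega) (by omega)]
    exact hL j hj
  · intro j hj1 hj2
    rw [key j (by omega) (by omega), k2]
    exact hM1 j hj1 hj2
  · intro j hj1 hj2
    rw [key j (by omega) (by omega), k0]
    exact hM2 j hj1 hj2
  · intro j hj
    rw [key j (by omega) (by omega), k0, k2]
    exact hR j hj

end Swap

section Count

open Classical in
lemma occ123_eq (π : Equiv.Perm (Fin n)) :
    occ perm123 S0 π = if ∃ i, Occ1 π i then 1 else 0 := by
  classical
  by_cases hex : ∃ i, Occ1 π i
  · rw [if_pos hex]
    haveI hne : Nonempty {i : Fin 3 → Fin n // IsMeshOcc perm123 S0 π i} :=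
      ⟨⟨hex.choose, (isMeshOcc1_iff π hex.choose).mpr hex.choose_spec⟩⟩
    haveI hss : Subsingleton {i : Fin 3 → Fin n // IsMeshOcc perm123 S0 π i} :=
      ⟨fun a b => Subtype.ext (occ1_unique ((isMeshOcc1_iff π a.1).mp a.2)
        ((isMeshOcc1_iff π b.1).mp b.2))⟩
    haveI := uniqueOfSubsingleton hne.some
    exact Nat.card_unique
  · rw [if_neg hex]
    haveI : IsEmpty {i : Fin 3 → Fin n // IsMeshOcc perm123 S0 π i} :=
      ⟨fun x => hex ⟨x.1, (isMeshOcc1_iff π x.1).mp x.2⟩⟩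
    exact Nat.card_of_isEmpty

open Classical in
lemma occ132_eq (π : Equiv.Perm (Fin n)) :
    occ perm132 S0 π = if ∃ i, Occ2 π i then 1 else 0 := by
  classical
  by_cases hex : ∃ i, Occ2 π i
  · rw [if_pos hex]
    haveI hne : Nonempty {i : Fin 3 → Fin n // IsMeshOcc perm132 S0 π i} :=
      ⟨⟨hex.choose, (isMeshOcc2_iff π hex.choose).mpr hex.choose_spec⟩⟩
    haveI hss : Subsingleton {i : Fin 3 → Fin n // IsMeshOcc perm132 S0 π i} :=
      ⟨fun a b => Subtype.ext (occ2_unique ((isMeshOcc2_iff π a.1).mp a.2)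
        ((isMeshOcc2_iff π b.1).mp b.2))⟩
    haveI := uniqueOfSubsingleton hne.some
    exact Nat.card_unique
  · rw [if_neg hex]
    haveI : IsEmpty {i : Fin 3 → Fin n // IsMeshOcc perm132 S0 π i} :=
      ⟨fun x => hex ⟨x.1, (isMeshOcc2_iff π x.1).mp x.2⟩⟩
    exact Nat.card_of_isEmpty

noncomputable def pairEquiv1 :
    {π : Equiv.Perm (Fin n) // ∃ i, Occ1 π i} ≃
      {p : Equiv.Perm (Fin n) × (Fin 3 → Fin n) // Occ1 p.1 p.2} where
  toFun := fun π => ⟨(π.1, Classical.choose π.2), Classical.choose_spec π.2⟩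
  invFun := fun p => ⟨p.1.1, ⟨p.1.2, p.2⟩⟩
  left_inv := fun π => Subtype.ext rfl
  right_inv := fun p => Subtype.ext (Prod.ext rfl (occ1_unique (Classical.choose_spec _) p.2))

noncomputable def pairEquiv2 :
    {π : Equiv.Perm (Fin n) // ∃ i, Occ2 π i} ≃
      {p : Equiv.Perm (Fin n) × (Fin 3 → Fin n) // Occ2 p.1 p.2} where
  toFun := fun π => ⟨(π.1, Classical.choose π.2), Classical.choose_spec π.2⟩
  invFun := fun p => ⟨p.1.1, ⟨p.1.2, p.2⟩⟩
  left_inv := fun π => Subtype.ext rfl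
  right_inv := fun p => Subtype.ext (Prod.ext rfl (occ2_unique (Classical.choose_spec _) p.2))

def swapEquiv :
    {p : Equiv.Perm (Fin n) × (Fin 3 → Fin n) // Occ1 p.1 p.2} ≃
      {p : Equiv.Perm (Fin n) × (Fin 3 → Fin n) // Occ2 p.1 p.2} where
  toFun := fun p => ⟨(p.1.1 * Equiv.swap (p.1.2 1) (p.1.2 2), p.1.2), occ1_swap p.2⟩
  invFun := fun p => ⟨(p.1.1 * Equiv.swap (p.1.2 1) (p.1.2 2), p.1.2), occ2_swap p.2⟩
  left_inv := fun p => Subtype.ext (Prod.ext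
    (show p.1.1 * Equiv.swap (p.1.2 1) (p.1.2 2) * Equiv.swap (p.1.2 1) (p.1.2 2) = p.1.1 by
      rw [mul_assoc, Equiv.swap_mul_self, mul_one]) rfl)
  right_inv := fun p => Subtype.ext (Prod.ext
    (show p.1.1 * Equiv.swap (p.1.2 1) (p.1.2 2) * Equiv.swap (p.1.2 1) (p.1.2 2) = p.1.1 by
      rw [mul_assoc, Equiv.swap_mul_self, mul_one]) rfl)

lemma card_E1_eq_card_E2 :
    Nat.card {π : Equiv.Perm (Fin n) // ∃ i, Occ1 π i} =
      Nat.card {π : Equiv.Perm (Fin n) // ∃ i, Occ2 π i} :=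
  Nat.card_congr (pairEquiv1.trans (swapEquiv.trans pairEquiv2.symm))

lemma card_main :
    Nat.card {π : Equiv.Perm (Fin n) // (∃ i, Occ1 π i) ∧ ¬ ∃ i, Occ2 π i} =
      Nat.card {π : Equiv.Perm (Fin n) // (∃ i, Occ2 π i) ∧ ¬ ∃ i, Occ1 π i} := by
  classical
  set A1 : Set (Equiv.Perm (Fin n)) := {π | ∃ i, Occ1 π i} with hA1
  set A2 : Set (Equiv.Perm (Fin n)) := {π | ∃ i, Occ2 π i} with hA2
  have hc1 : Nat.card {π : Equiv.Perm (Fin n) // (∃ i, Occ1 π i) ∧ ¬ ∃ i, Occ2 π i} =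
      (A1 \ A2).ncard := by
    rw [← Nat.card_coe_set_eq]
    exact Nat.card_congr (Equiv.subtypeEquivRight (fun π => by
      simp [hA1, hA2, Set.mem_diff]))
  have hc2 : Nat.card {π : Equiv.Perm (Fin n) // (∃ i, Occ2 π i) ∧ ¬ ∃ i, Occ1 π i} =
      (A2 \ A1).ncard := by
    rw [← Nat.card_coe_set_eq]
    exact Nat.card_congr (Equiv.subtypeEquivRight (fun π => by
      simp [hA1, hA2, Set.mem_diff]))
  have hAcard : A1.ncard = A2.ncard := by
    rw [← Nat.card_coe_set_eq, ← Nat.card_coe_set_eq]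
    exact card_E1_eq_card_E2
  have d1 : (A1 \ A2).ncard = A1.ncard - (A1 ∩ A2).ncard := by
    rw [← Set.diff_self_inter]
    exact Set.ncard_diff Set.inter_subset_left (Set.toFinite _)
  have d2 : (A2 \ A1).ncard = A2.ncard - (A1 ∩ A2).ncard := by
    rw [← Set.diff_self_inter, Set.inter_comm]
    exact Set.ncard_diff Set.inter_subset_right (Set.toFinite _)
  rw [hc1, hc2, d1, d2, hAcard]

end Count
end Aux10


theorem statement_10 :
    JointlyEquidistributed perm123 ({(0, 0), (0, 1), (0, 2), (1, 3), (2, 1), (2, 2), (2, 3), (3, 0), (3, 3)} : Set (ℕ × ℕ))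
      perm132 ({(0, 0), (0, 1), (0, 2), (1, 3), (2, 1), (2, 2), (2, 3), (3, 0), (3, 3)} : Set (ℕ × ℕ)) := by
  intro n k ℓ
  show Nat.card {π : Equiv.Perm (Fin n) // occ perm123 Aux10.S0 π = k ∧ occ perm132 Aux10.S0 π = ℓ} =
    Nat.card {π : Equiv.Perm (Fin n) // occ perm123 Aux10.S0 π = ℓ ∧ occ perm132 Aux10.S0 π = k}
  classical
  rcases eq_or_ne k ℓ with rfl | hkl
  · rfl
  by_cases hk2 : 2 ≤ k
  · haveI : IsEmpty {π : Equiv.Perm (Fin n) //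
        occ perm123 Aux10.S0 π = k ∧ occ perm132 Aux10.S0 π = ℓ} :=
      ⟨fun x => by
        have h := x.2.1
        rw [Aux10.occ123_eq] at h
        split at h <;> omega⟩
    haveI : IsEmpty {π : Equiv.Perm (Fin n) //
        occ perm123 Aux10.S0 π = ℓ ∧ occ perm132 Aux10.S0 π = k} :=
      ⟨fun x => by
        have h := x.2.2
        rw [Aux10.occ132_eq] at h
        split at h <;> omega⟩
    rw [Nat.card_of_isEmpty, Nat.card_of_isEmpty]
  by_cases hl2 : 2 ≤ ℓ
  · haveI : IsEmpty {π : Equiv.Perm (Fin n) //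
        occ perm123 Aux10.S0 π = k ∧ occ perm132 Aux10.S0 π = ℓ} :=
      ⟨fun x => by
        have h := x.2.2
        rw [Aux10.occ132_eq] at h
        split at h <;> omega⟩
    haveI : IsEmpty {π : Equiv.Perm (Fin n) //
        occ perm123 Aux10.S0 π = ℓ ∧ occ perm132 Aux10.S0 π = k} :=
      ⟨fun x => by
        have h := x.2.1
        rw [Aux10.occ123_eq] at h
        split at h <;> omega⟩
    rw [Nat.card_of_isEmpty, Nat.card_of_isEmpty]
  -- now k, ℓ ≤ 1 and k ≠ ℓ
  have h1z : ∀ π : Equiv.Perm (Fin n),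
      occ perm123 Aux10.S0 π = 0 ↔ ¬ ∃ i, Aux10.Occ1 π i := by
    intro π; rw [Aux10.occ123_eq]; split <;> simp_all
  have h1o : ∀ π : Equiv.Perm (Fin n),
      occ perm123 Aux10.S0 π = 1 ↔ ∃ i, Aux10.Occ1 π i := by
    intro π; rw [Aux10.occ123_eq]; split <;> simp_all
  have h2z : ∀ π : Equiv.Perm (Fin n),
      occ perm132 Aux10.S0 π = 0 ↔ ¬ ∃ i, Aux10.Occ2 π i := by
    intro π; rw [Aux10.occ132_eq]; split <;> simp_all
  have h2o : ∀ π : Equiv.Perm (Fin n),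
      occ perm132 Aux10.S0 π = 1 ↔ ∃ i, Aux10.Occ2 π i := by
    intro π; rw [Aux10.occ132_eq]; split <;> simp_all
  interval_cases k <;> interval_cases ℓ
  · exact absurd rfl hkl
  · -- k = 0, ℓ = 1
    rw [Nat.card_congr (Equiv.subtypeEquivRight
        (fun π => (and_congr (h1z π) (h2o π)).trans and_comm)),
      Nat.card_congr (Equiv.subtypeEquivRight (fun π => and_congr (h1o π) (h2z π)))]
    exact Aux10.card_main.symm
  · -- k = 1, ℓ = 0
    rw [Nat.card_congr (Equiv.subtypeEquivRight (fun π => and_congr (h1o π) (h2z π))),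
      Nat.card_congr (Equiv.subtypeEquivRight
        (fun π => (and_congr (h1z π) (h2o π)).trans and_comm))]
    exact Aux10.card_main
  · exact absurd rfl hkl
end

section
/- Let R = {(0,1),(0,2),(1,1),(1,2)}. The mesh patterns p1 = (12, R) and p2 = (21, R) are jointly equidistributed. -/
/-!
An occurrence `(u, t)` of either pattern with the shading `ℛ` is determined by `t`: `π u` is the
largest value before position `t`, and all other earlier values lie below `min (π u) (π t)`.
So occurrences of `12` correspond to the positions `t > 0` with no earlier larger value, and those
of `21` to the positions with exactly one; these are the entries `0` and `1` of the Lehmer code of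
`π`. The Lehmer code is a bijection from `S_n` onto `∏ₜ {0, …, t}`, so swapping the values `0 ↔ 1`
in every entry is an involution of `S_n` exchanging the two statistics.
-/

open Finset

section Lehmer

variable {n : ℕ}

def lehmer (π : Equiv.Perm (Fin n)) (t : Fin n) : ℕ := #{s ∈ Iio t | π t < π s}

lemma lehmer_le (π : Equiv.Perm (Fin n)) (t : Fin n) : lehmer π t ≤ t :=
  (card_filter_le _ _).trans (Fin.card_Iio t).le

lemma Equiv.Perm.not_lt_apply_iff {π : Equiv.Perm (Fin n)} {s t : Fin n} (h : s ≠ t) :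
    ¬ π t < π s ↔ π s < π t := by
  rw [not_lt, (π.injective.ne h).le_iff_lt]

lemma lehmer_eq_zero_iff {π : Equiv.Perm (Fin n)} {t : Fin n} :
    lehmer π t = 0 ↔ ∀ s < t, π s < π t := by
  simp only [lehmer, card_eq_zero, filter_eq_empty_iff, mem_Iio]
  exact forall₂_congr fun s hs => π.not_lt_apply_iff hs.ne

lemma lehmer_eq_one_iff {π : Equiv.Perm (Fin n)} {t : Fin n} :
    lehmer π t = 1 ↔ ∃ u < t, π t < π u ∧ ∀ s < t, s ≠ u → π s < π t := by
  simp only [lehmer, card_eq_one, eq_singleton_iff_unique_mem, mem_filter, mem_Iio, and_assoc]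
  refine exists_congr fun u => and_congr_right' <| and_congr_right' <| forall_congr' fun s => ?_
  rw [and_imp]
  exact imp_congr_right fun hs => by rw [← π.not_lt_apply_iff hs.ne, not_imp_not]

lemma Finset.strictAntiOn_card_filter_lt {α : Type*} [LinearOrder α] (A : Finset α) :
    StrictAntiOn (fun a => #{v ∈ A | a < v}) A := by
  intro a _ b hb hab
  refine card_lt_card <| (ssubset_iff_of_subset ?_).2 ⟨b, by simp [mem_coe.1 hb, hab], by simp⟩
  intro v
  simp only [mem_filter, and_imp]
  exact fun hv hbv => ⟨hv, hab.trans hbv⟩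

lemma lehmer_eq_card_image (π : Equiv.Perm (Fin n)) (t : Fin n) :
    lehmer π t = #{v ∈ (Iic t).image π | π t < v} := by
  rw [filter_image, card_image_of_injective _ π.injective, lehmer]
  congr 1
  ext s
  simp only [mem_filter, mem_Iio, mem_Iic]
  exact ⟨fun h => ⟨h.1.le, h.2⟩,
    fun h => ⟨h.1.lt_of_ne (by rintro rfl; exact lt_irrefl _ h.2), h.2⟩⟩

lemma image_Iic_eq_of_eqOn_Ioi {π σ : Equiv.Perm (Fin n)} {t : Fin n}
    (h : ∀ s, t < s → π s = σ s) : (Iic t).image π = (Iic t).image σ := by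
  have key : ∀ {π σ : Equiv.Perm (Fin n)}, (∀ s, t < s → π s = σ s) →
      (Iic t).image π ⊆ (Iic t).image σ := by
    intro π σ h v hv
    obtain ⟨s, hs, rfl⟩ := mem_image.1 hv
    refine mem_image.2 ⟨σ.symm (π s), mem_Iic.2 (not_lt.1 fun hlt => ?_), by simp⟩
    have := h _ hlt
    rw [Equiv.apply_symm_apply, π.injective.eq_iff] at this
    exact not_lt.2 (mem_Iic.1 hs) (this ▸ hlt)
  exact (key h).antisymm (key fun s hs => (h s hs).symm)

/-- `π t` is the element of `π '' Iic t = σ '' Iic t` with exactly `lehmer π t` larger elements. -/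
lemma apply_eq_of_lehmer_eq {π σ : Equiv.Perm (Fin n)} {t : Fin n}
    (hl : lehmer π t = lehmer σ t) (h : ∀ s, t < s → π s = σ s) : π t = σ t := by
  have hA := image_Iic_eq_of_eqOn_Ioi h
  refine (strictAntiOn_card_filter_lt _).injOn (mem_image_of_mem π (mem_Iic.2 le_rfl))
    (hA ▸ mem_image_of_mem σ (mem_Iic.2 le_rfl)) ?_
  simpa only [lehmer_eq_card_image, hA] using hl

lemma lehmer_injective : Function.Injective (lehmer (n := n)) := by
  intro π σ h
  ext1 t
  induction t using WellFoundedGT.induction with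
  | _ t ih => exact apply_eq_of_lehmer_eq (congrFun h t) ih

lemma card_perm_fin_eq_card_pi :
    Fintype.card (Equiv.Perm (Fin n)) = Fintype.card (∀ t : Fin n, Fin (t + 1)) := by
  simp only [Fintype.card_perm, Fintype.card_pi, Fintype.card_fin]
  rw [Fin.prod_univ_eq_prod_range (· + 1), prod_range_add_one_eq_factorial]

noncomputable def lehmerEquiv : Equiv.Perm (Fin n) ≃ ∀ t : Fin n, Fin (t + 1) :=
  Equiv.ofBijective (fun π t => ⟨lehmer π t, Nat.lt_succ_of_le (lehmer_le π t)⟩) <|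
    (Fintype.bijective_iff_injective_and_card _).2
      ⟨fun _ _ h => lehmer_injective (funext fun t => congrArg Fin.val (congrFun h t)),
        card_perm_fin_eq_card_pi⟩

noncomputable def swapLehmer : Equiv.Perm (Equiv.Perm (Fin n)) :=
  lehmerEquiv.symm.permCongr (Equiv.piCongrRight fun _ => Equiv.swap 0 1)

lemma Fin.val_swap_zero_one {k : ℕ} (hk : k ≠ 0) (x : Fin (k + 1)) :
    ((Equiv.swap 0 1 x : Fin (k + 1)) : ℕ) = Equiv.swap 0 1 (x : ℕ) := by
  have h1 : ((1 : Fin (k + 1)) : ℕ) = 1 := by rw [Fin.val_one', Nat.mod_eq_of_lt (by omega)]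
  rw [← Fin.val_injective.swap_apply, Fin.val_zero, h1]

lemma lehmer_swapLehmer (π : Equiv.Perm (Fin n)) {t : Fin n} (ht : (t : ℕ) ≠ 0) :
    lehmer (swapLehmer π) t = Equiv.swap 0 1 (lehmer π t) := by
  have h : lehmerEquiv (swapLehmer π) t = Equiv.swap 0 1 (lehmerEquiv π t) := by
    simp [swapLehmer, Equiv.permCongr_apply]
  exact (congrArg Fin.val h).trans (Fin.val_swap_zero_one ht _)

lemma lehmer_swapLehmer_eq_zero_iff (π : Equiv.Perm (Fin n)) (t : Fin n) :
    (t : ℕ) ≠ 0 ∧ lehmer (swapLehmer π) t = 0 ↔ lehmer π t = 1 := by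
  by_cases ht : (t : ℕ) = 0
  · have := lehmer_le π t
    omega
  · simp [ht, lehmer_swapLehmer π ht, Equiv.swap_apply_eq_iff]

lemma lehmer_swapLehmer_eq_one_iff (π : Equiv.Perm (Fin n)) (t : Fin n) :
    lehmer (swapLehmer π) t = 1 ↔ (t : ℕ) ≠ 0 ∧ lehmer π t = 0 := by
  by_cases ht : (t : ℕ) = 0
  · have := lehmer_le (swapLehmer π) t
    omega
  · simp [ht, lehmer_swapLehmer π ht, Equiv.swap_apply_eq_iff]

end Lehmer

/-- The shaded boxes: left of the second point of an occurrence and above its lower value. -/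
local notation "ℛ" => ({(0, 1), (0, 2), (1, 1), (1, 2)} : Set (ℕ × ℕ))

section Mesh

variable {n : ℕ}

lemma forall_lt_iff_lt_iff_strictMono {α β γ : Type*} [LinearOrder β] [LinearOrder γ]
    (e : α ≃ γ) (f : α → β) :
    (∀ a b, f a < f b ↔ e a < e b) ↔ StrictMono (f ∘ e.symm) := by
  refine ⟨fun h c d hcd => (h _ _).2 (by simpa using hcd), fun h a b => ?_⟩
  simpa using h.lt_iff_lt (a := e a) (b := e b)

lemma forall_mem_shading {Q : ℕ → ℕ → Prop} :
    (∀ a b, (a, b) ∈ ℛ → Q a b) ↔ Q 0 1 ∧ Q 0 2 ∧ Q 1 1 ∧ Q 1 2 := by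
  simp [or_imp, forall_and]

lemma posExt_fin_two (i : Fin 2 → Fin n) :
    posExt i 0 = 0 ∧ posExt i 1 = i 0 + 1 ∧ posExt i 2 = i 1 + 1 := by
  simp [posExt]

lemma valExt_fin_two (τ : Equiv.Perm (Fin 2)) (π : Equiv.Perm (Fin n)) (i : Fin 2 → Fin n) :
    valExt τ π i 1 = π (i (τ.symm 0)) + 1 ∧ valExt τ π i 2 = π (i (τ.symm 1)) + 1 ∧
      valExt τ π i 3 = n + 1 := by
  simp [valExt]

lemma shadedRegion_avoided_iff {τ : Equiv.Perm (Fin 2)} {π : Equiv.Perm (Fin n)} {i : Fin 2 → Fin n}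
    (h01 : i 0 < i 1) (hm : π (i (τ.symm 0)) < π (i (τ.symm 1))) :
    (∀ a b : ℕ, (a, b) ∈ ℛ →
      ¬ ∃ j : Fin n,
        posExt i a < (j : ℕ) + 1 ∧ (j : ℕ) + 1 < posExt i (a + 1) ∧
        valExt τ π i b < ((π j : Fin n) : ℕ) + 1 ∧
        ((π j : Fin n) : ℕ) + 1 < valExt τ π i (b + 1)) ↔
      ∀ j < i 1, j ≠ i 0 → π j < π (i (τ.symm 0)) := by
  obtain ⟨hp0, hp1, hp2⟩ := posExt_fin_two i
  obtain ⟨hv1, hv2, hv3⟩ := valExt_fin_two τ π i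
  simp only [forall_mem_shading, hp0, hp1, hp2, hv1, hv2, hv3, zero_add, Nat.reduceAdd,
    add_lt_add_iff_right, Fin.val_fin_lt, Nat.succ_pos, Fin.is_lt, not_exists, not_and,
    forall_const, imp_false, not_true_eq_false]
  have hvals : ∀ j, j ≠ i 0 → j ≠ i 1 → ∀ c, π j ≠ π (i (τ.symm c)) := fun j h0 h1 c =>
    π.injective.ne <| (Fin.forall_fin_two (p := fun c => j ≠ i c)).2 ⟨h0, h1⟩ _
  constructor
  · rintro ⟨h₁, h₂, h₃, h₄⟩ j hj hj0
    have hlo := hvals j hj0 hj.ne 0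
    by_contra hge
    have hlo' := (not_lt.1 hge).lt_of_ne' hlo
    rcases (hvals j hj0 hj.ne 1).lt_or_gt with hhi | hhi <;> rcases hj0.lt_or_gt with hp | hp
    · exact h₁ j hp hlo' hhi
    · exact h₃ j hp hj hlo' hhi
    · exact h₂ j hp hhi
    · exact h₄ j hp hj hhi
  · intro h
    refine ⟨fun j hp hlo _ => ?_, fun j hp hhi => ?_, fun j hp hj hlo _ => ?_,
      fun j hp hj hhi => ?_⟩
    · exact (h j (hp.trans h01) hp.ne).asymm hlo
    · exact (h j (hp.trans h01) hp.ne).asymm (hm.trans hhi)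
    · exact (h j hj hp.ne').asymm hlo
    · exact (h j hj hp.ne').asymm (hm.trans hhi)

lemma isMeshOcc_shading_iff (τ : Equiv.Perm (Fin 2)) (π : Equiv.Perm (Fin n))
    (i : Fin 2 → Fin n) :
    IsMeshOcc τ ℛ π i ↔ i 0 < i 1 ∧ π (i (τ.symm 0)) < π (i (τ.symm 1)) ∧
      ∀ j < i 1, j ≠ i 0 → π j < π (i (τ.symm 0)) := by
  rw [IsMeshOcc, forall_lt_iff_lt_iff_strictMono τ fun a => π (i a),
    Fin.strictMono_iff_lt_succ, Fin.strictMono_iff_lt_succ]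
  simp only [Fin.castSucc_zero, Fin.succ_zero_eq_one, Fin.forall_fin_one, Function.comp_apply]
  exact and_congr_right fun h01 => and_congr_right fun hm => shadedRegion_avoided_iff h01 hm

variable {τ : Equiv.Perm (Fin 2)} {π : Equiv.Perm (Fin n)}

lemma IsMeshOcc.apply_lt_of_shading {i : Fin 2 → Fin n} (hi : IsMeshOcc τ ℛ π i) :
    ∀ j < i 1, j ≠ i 0 → π j < π (i 0) := by
  obtain ⟨-, hm, hlt⟩ := (isMeshOcc_shading_iff τ π i).1 hi
  have hmin : ∀ c, π (i (τ.symm 0)) ≤ π (i (τ.symm c)) :=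
    Fin.forall_fin_two.2 ⟨le_rfl, hm.le⟩
  exact fun j hj hj0 => (hlt j hj hj0).trans_le (by simpa using hmin (τ 0))

lemma eq_of_isMeshOcc_shading {i i' : Fin 2 → Fin n} (hi : IsMeshOcc τ ℛ π i)
    (hi' : IsMeshOcc τ ℛ π i') (h : i 1 = i' 1) : i = i' := by
  have h0 : i 0 = i' 0 := by
    by_contra hne
    have h01 := ((isMeshOcc_shading_iff τ π i).1 hi).1
    have h01' := ((isMeshOcc_shading_iff τ π i').1 hi').1
    exact (hi.apply_lt_of_shading _ (h ▸ h01') (Ne.symm hne)).asymm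
      (hi'.apply_lt_of_shading _ (h ▸ h01) hne)
  ext c
  fin_cases c
  exacts [congrArg Fin.val h0, congrArg Fin.val h]

lemma occ_shading_eq_natCard {P : Fin n → Prop}
    (hP : ∀ t, P t ↔ ∃ i, IsMeshOcc τ ℛ π i ∧ i 1 = t) :
    occ τ ℛ π = Nat.card {t // P t} := by
  refine Nat.card_congr <| Equiv.ofBijective (fun i => ⟨i.1 1, (hP _).2 ⟨i.1, i.2, rfl⟩⟩)
    ⟨fun i i' h => Subtype.ext (eq_of_isMeshOcc_shading i.2 i'.2 (congrArg Subtype.val h)),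
      fun t => ?_⟩
  obtain ⟨t, ht⟩ := t
  obtain ⟨i, hi, rfl⟩ := (hP t).1 ht
  exact ⟨⟨i, hi⟩, rfl⟩

lemma isMeshOcc_perm12_iff {i : Fin 2 → Fin n} :
    IsMeshOcc perm12 ℛ π i ↔
      i 0 < i 1 ∧ π (i 0) < π (i 1) ∧ ∀ j < i 1, j ≠ i 0 → π j < π (i 0) := by
  simpa [perm12, ← Equiv.Perm.inv_def] using isMeshOcc_shading_iff perm12 π i

lemma isMeshOcc_perm21_iff {i : Fin 2 → Fin n} :
    IsMeshOcc perm21 ℛ π i ↔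
      i 0 < i 1 ∧ π (i 1) < π (i 0) ∧ ∀ j < i 1, j ≠ i 0 → π j < π (i 1) := by
  simpa [perm21] using isMeshOcc_shading_iff perm21 π i

lemma occ_perm12 : occ perm12 ℛ π = Nat.card {t : Fin n // (t : ℕ) ≠ 0 ∧ lehmer π t = 0} := by
  refine occ_shading_eq_natCard fun t => ⟨fun ⟨ht, hl⟩ => ?_, ?_⟩
  · obtain ⟨u, hu, hmax⟩ := (Iio t).exists_max_image π
      ⟨⟨0, t.pos⟩, mem_Iio.2 (Nat.pos_of_ne_zero ht)⟩
    rw [mem_Iio] at hu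
    have hprefix : ∀ j < t, j ≠ u → π j < π u := fun j hj hju =>
      (hmax j (mem_Iio.2 hj)).lt_of_ne (π.injective.ne hju)
    exact ⟨![u, t], isMeshOcc_perm12_iff.2 ⟨hu, lehmer_eq_zero_iff.1 hl u hu, hprefix⟩, rfl⟩
  · rintro ⟨i, hi, rfl⟩
    obtain ⟨h01, hv, hmax⟩ := isMeshOcc_perm12_iff.1 hi
    refine ⟨(Nat.zero_lt_of_lt h01).ne', lehmer_eq_zero_iff.2 fun s hs => ?_⟩
    by_cases hs0 : s = i 0
    · exact hs0 ▸ hv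
    · exact (hmax s hs hs0).trans hv

lemma occ_perm21 : occ perm21 ℛ π = Nat.card {t // lehmer π t = 1} := by
  refine occ_shading_eq_natCard fun t => ?_
  rw [lehmer_eq_one_iff]
  constructor
  · rintro ⟨u, hu, hv, hmax⟩
    exact ⟨![u, t], isMeshOcc_perm21_iff.2 ⟨hu, hv, hmax⟩, rfl⟩
  · rintro ⟨i, hi, rfl⟩
    exact ⟨i 0, isMeshOcc_perm21_iff.1 hi⟩

lemma occ_perm12_swapLehmer : occ perm12 ℛ (swapLehmer π) = occ perm21 ℛ π := by
  simp only [occ_perm12, occ_perm21, lehmer_swapLehmer_eq_zero_iff]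

lemma occ_perm21_swapLehmer : occ perm21 ℛ (swapLehmer π) = occ perm12 ℛ π := by
  simp only [occ_perm12, occ_perm21, lehmer_swapLehmer_eq_one_iff]

end Mesh

theorem statement_13 :
    JointlyEquidistributed perm12 ({(0, 1), (0, 2), (1, 1), (1, 2)} : Set (ℕ × ℕ))
      perm21 ({(0, 1), (0, 2), (1, 1), (1, 2)} : Set (ℕ × ℕ)) := by
  intro n k ℓ
  refine Nat.card_congr (swapLehmer.subtypeEquiv fun π => ?_)
  rw [occ_perm12_swapLehmer, occ_perm21_swapLehmer, and_comm]
end
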